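/- arXiv:2109.06378 — 8 statements merged into one kernel-verified Lean document; each statement's English description precedes it below -/
import Mathlib

section
/- Let $0<p<1$. The function $G(u,y):=\sup_{c\ge u}\left(\frac{c^p}{p}-cy\right)$ is continuously differentiable on $(0,\infty)\times(0,\infty)$, with partial derivatives $\partial_u G(u,y)=-(y-u^{p-1})^+$ and $\partial_y G(u,y)=-\max\{y^{1/(p-1)},\,u\}$, where $t^+:=\max\{t,0\}$. -/
open Real Set

/-- `G p u y = sup_{c ≥ u} (c^p/p - c y)`. -/
noncomputable def G (p u y : ℝ) : ℝ :=
  sSup ((fun c : ℝ => c ^ p / p - c * y) '' {c : ℝ | u ≤ c})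

/-!
For `y > 0` the payoff `c ↦ c^p/p - c y` has derivative `c^(p-1) - y`, so it increases up to
its critical point `c* = y^(1/(p-1))` and decreases after it; hence `G u y` is the payoff at
`max c* u`. For `u ≤ c*` this is `(1/p - 1) y^(p/(p-1))`, for `u ≥ c*` it is `u^p/p - u y`. Both
closed forms are smooth, and on the interface `u = c*` their gradients agree because the
`c`-derivative of the payoff vanishes at `c*`, so the glued function is differentiable with the
continuous gradient `(-(y - u^(p-1))⁺, -max c* u)`.
-/

open Filter Topology

section Calculus

variable {𝕜 E F : Type*} [NontriviallyNormedField 𝕜] [NormedAddCommGroup E] [NormedSpace 𝕜 E]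
  [NormedAddCommGroup F] [NormedSpace 𝕜 F]

theorem contDiffOn_one_of_hasFDerivAt {f : E → F} {f' : E → E →L[𝕜] F} {s : Set E}
    (hs : IsOpen s) (hf : ∀ x ∈ s, HasFDerivAt f (f' x) x) (hf' : ContinuousOn f' s) :
    ContDiffOn 𝕜 1 f s :=
  (contDiffOn_succ_iff_hasFDerivWithinAt_of_uniqueDiffOn (n := 0) hs.uniqueDiffOn).2
    ⟨nofun, f', contDiffOn_zero.2 hf', fun x hx => (hf x hx).hasFDerivWithinAt⟩

theorem hasFDerivAt_of_eventuallyEq_of_le_of_ge {f A B : E → F} {g : E → ℝ} {f' : E →L[𝕜] F}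
    {x : E} (hg : ContinuousAt g x)
    (hA : g x ≤ 0 → HasFDerivAt A f' x) (hB : 0 ≤ g x → HasFDerivAt B f' x)
    (hfA : ∀ᶠ y in 𝓝 x, g y ≤ 0 → f y = A y) (hfB : ∀ᶠ y in 𝓝 x, 0 ≤ g y → f y = B y) :
    HasFDerivAt f f' x := by
  rcases lt_trichotomy (g x) 0 with hlt | heq | hgt
  · refine (hA hlt.le).congr_of_eventuallyEq ?_
    filter_upwards [hg.eventually_lt continuousAt_const hlt, hfA] with y hy hfy using hfy hy.le
  · have hle : HasFDerivWithinAt f f' {y | g y ≤ 0} x :=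
      (hA heq.le).hasFDerivWithinAt.congr_of_eventuallyEq (eventually_nhdsWithin_iff.2 hfA)
        (hfA.self_of_nhds heq.le)
    have hge : HasFDerivWithinAt f f' {y | 0 ≤ g y} x :=
      (hB heq.ge).hasFDerivWithinAt.congr_of_eventuallyEq (eventually_nhdsWithin_iff.2 hfB)
        (hfB.self_of_nhds heq.ge)
    have hunion : {y | g y ≤ 0} ∪ {y | 0 ≤ g y} = univ :=
      eq_univ_of_forall fun y => le_total (g y) 0
    simpa only [hunion, hasFDerivWithinAt_univ] using hle.union hge
  · refine (hB hgt.le).congr_of_eventuallyEq ?_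
    filter_upwards [continuousAt_const.eventually_lt hg hgt, hfB] with y hy hfy using hfy hy.le

end Calculus

noncomputable def payoff (p y c : ℝ) : ℝ := c ^ p / p - c * y

noncomputable def critPoint (p y : ℝ) : ℝ := y ^ (1 / (p - 1))

section Maximization

variable {p u y c : ℝ}

theorem critPoint_pos (hy : 0 < y) : 0 < critPoint p y := rpow_pos_of_pos hy _

theorem critPoint_rpow_sub_one (hp1 : p ≠ 1) (hy : 0 ≤ y) : critPoint p y ^ (p - 1) = y := by
  rw [critPoint, one_div, rpow_inv_rpow hy (sub_ne_zero.2 hp1)]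

theorem critPoint_le_iff (hp1 : p < 1) (hy : 0 < y) (hc : 0 < c) :
    critPoint p y ≤ c ↔ c ^ (p - 1) ≤ y := by
  rw [← rpow_le_rpow_iff_of_neg hc (critPoint_pos hy) (sub_neg.2 hp1),
    critPoint_rpow_sub_one hp1.ne hy.le]

theorem le_critPoint_iff (hp1 : p < 1) (hy : 0 < y) (hc : 0 < c) :
    c ≤ critPoint p y ↔ y ≤ c ^ (p - 1) := by
  rw [← rpow_le_rpow_iff_of_neg (critPoint_pos hy) hc (sub_neg.2 hp1),
    critPoint_rpow_sub_one hp1.ne hy.le]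

theorem hasDerivAt_payoff (hp0 : p ≠ 0) (hc : c ≠ 0) :
    HasDerivAt (payoff p y) (c ^ (p - 1) - y) c := by
  have h := ((hasDerivAt_rpow_const (p := p) (Or.inl hc)).div_const p).sub
    ((hasDerivAt_id c).mul_const y)
  rwa [mul_div_cancel_left₀ _ hp0, one_mul] at h

theorem continuousOn_payoff (hp0 : p ≠ 0) : ContinuousOn (payoff p y) (Ioi 0) :=
  fun _ hc => (hasDerivAt_payoff hp0 (ne_of_gt hc)).continuousAt.continuousWithinAt

theorem payoff_monotoneOn (hp0 : p ≠ 0) (hp1 : p < 1) (hy : 0 < y) :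
    MonotoneOn (payoff p y) (Ioc 0 (critPoint p y)) := by
  refine monotoneOn_of_hasDerivWithinAt_nonneg (f' := fun c => c ^ (p - 1) - y) (convex_Ioc _ _)
    ((continuousOn_payoff hp0).mono Ioc_subset_Ioi_self) (fun c hc => ?_) fun c hc => ?_
  · rw [interior_Ioc] at hc
    exact (hasDerivAt_payoff hp0 hc.1.ne').hasDerivWithinAt
  · rw [interior_Ioc] at hc
    exact sub_nonneg.2 ((le_critPoint_iff hp1 hy hc.1).1 hc.2.le)

theorem payoff_antitoneOn (hp0 : p ≠ 0) (hp1 : p < 1) (hy : 0 < y) :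
    AntitoneOn (payoff p y) (Ici (critPoint p y)) := by
  have hIci : Ici (critPoint p y) ⊆ Ioi 0 := Ici_subset_Ioi.2 (critPoint_pos hy)
  refine antitoneOn_of_hasDerivWithinAt_nonpos (f' := fun c => c ^ (p - 1) - y) (convex_Ici _)
    ((continuousOn_payoff hp0).mono hIci) (fun c hc => ?_) fun c hc => ?_
  · rw [interior_Ici] at hc
    exact (hasDerivAt_payoff hp0 (hIci (Ioi_subset_Ici_self hc)).ne').hasDerivWithinAt
  · rw [interior_Ici] at hc
    exact sub_nonpos.2 ((critPoint_le_iff hp1 hy (hIci (Ioi_subset_Ici_self hc))).1 hc.le)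

theorem isGreatest_payoff (hp0 : p ≠ 0) (hp1 : p < 1) (hu : 0 < u) (hy : 0 < y) :
    IsGreatest (payoff p y '' Ici u) (payoff p y (max (critPoint p y) u)) := by
  refine ⟨mem_image_of_mem _ (le_max_right (critPoint p y) u), ?_⟩
  rintro _ ⟨c, hc : u ≤ c, rfl⟩
  rcases le_total c (critPoint p y) with hc' | hc'
  · rw [max_eq_left (hc.trans hc')]
    exact payoff_monotoneOn hp0 hp1 hy ⟨hu.trans_le hc, hc'⟩ ⟨critPoint_pos hy, le_rfl⟩ hc'
  · exact payoff_antitoneOn hp0 hp1 hy (le_max_left (critPoint p y) u) hc' (max_le hc' hc)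

theorem G_eq_payoff_max (hp0 : p ≠ 0) (hp1 : p < 1) (hu : 0 < u) (hy : 0 < y) :
    G p u y = payoff p y (max (critPoint p y) u) :=
  (isGreatest_payoff hp0 hp1 hu hy).csSup_eq

theorem payoff_critPoint (hp1 : p ≠ 1) (hy : 0 < y) :
    payoff p y (critPoint p y) = (1 / p - 1) * y ^ (p / (p - 1)) := by
  have hp1' : p - 1 ≠ 0 := sub_ne_zero.2 hp1
  have hpow : critPoint p y ^ p = y ^ (p / (p - 1)) := by
    rw [critPoint, ← rpow_mul hy.le, one_div_mul_eq_div]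
  have hmul : critPoint p y * y = y ^ (p / (p - 1)) := by
    rw [critPoint, ← rpow_add_one hy.ne', div_add_one hp1', add_sub_cancel]
  rw [payoff, hpow, hmul]
  ring

end Maximization

noncomputable def gradG (p : ℝ) (q : ℝ × ℝ) : ℝ × ℝ →L[ℝ] ℝ :=
  (-max (q.2 - q.1 ^ (p - 1)) 0) • ContinuousLinearMap.fst ℝ ℝ ℝ +
    (-max (critPoint p q.2) q.1) • ContinuousLinearMap.snd ℝ ℝ ℝ

section Plane

variable {p y : ℝ} {q : ℝ × ℝ}

theorem hasDerivAt_payoff_critPoint (hp0 : p ≠ 0) (hp1 : p ≠ 1) (hy : 0 < y) :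
    HasDerivAt (fun t => payoff p t (critPoint p t)) (-critPoint p y) y := by
  have hp1' : p - 1 ≠ 0 := sub_ne_zero.2 hp1
  have hclosed : HasDerivAt (fun t => (1 / p - 1) * t ^ (p / (p - 1)))
      ((1 / p - 1) * (p / (p - 1) * y ^ (p / (p - 1) - 1))) y :=
    (hasDerivAt_rpow_const (Or.inl hy.ne')).const_mul _
  have hexp : p / (p - 1) - 1 = 1 / (p - 1) := by field_simp; ring
  have hcoef : (1 / p - 1) * (p / (p - 1)) = -1 := by field_simp; ring
  rw [hexp, ← mul_assoc, hcoef, neg_one_mul] at hclosed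
  refine hclosed.congr_of_eventuallyEq ?_
  filter_upwards [isOpen_Ioi.mem_nhds hy] with t ht using payoff_critPoint hp1 ht

theorem hasFDerivAt_payoff_snd_fst (hp0 : p ≠ 0) (hu : 0 < q.1) :
    HasFDerivAt (fun q : ℝ × ℝ => payoff p q.2 q.1)
      ((q.1 ^ (p - 1) - q.2) • ContinuousLinearMap.fst ℝ ℝ ℝ -
        q.1 • ContinuousLinearMap.snd ℝ ℝ ℝ) q := by
  have hpayoff : (fun q : ℝ × ℝ => payoff p q.2 q.1) = fun q => q.1 ^ p * p⁻¹ - q.1 * q.2 := by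
    simp only [payoff, div_eq_mul_inv]
  rw [hpayoff]
  refine (((hasFDerivAt_fst.rpow_const (p := p) (Or.inl hu.ne')).mul_const p⁻¹).sub
    (hasFDerivAt_fst.mul (hasFDerivAt_snd (p := q)))).congr_fderiv ?_
  ext <;> simp [inv_mul_cancel_left₀ hp0]

theorem gradG_eq_of_le (hp1 : p < 1) (hu : 0 < q.1) (hy : 0 < q.2) (h : q.1 ≤ critPoint p q.2) :
    gradG p q = (-critPoint p q.2) • ContinuousLinearMap.snd ℝ ℝ ℝ := by
  have hfst : max (q.2 - q.1 ^ (p - 1)) 0 = 0 :=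
    max_eq_right (sub_nonpos.2 ((le_critPoint_iff hp1 hy hu).1 h))
  ext <;> simp [gradG, hfst, max_eq_left h]

theorem gradG_eq_of_ge (hp1 : p < 1) (hu : 0 < q.1) (hy : 0 < q.2) (h : critPoint p q.2 ≤ q.1) :
    gradG p q = (q.1 ^ (p - 1) - q.2) • ContinuousLinearMap.fst ℝ ℝ ℝ -
        q.1 • ContinuousLinearMap.snd ℝ ℝ ℝ := by
  have hfst : max (q.2 - q.1 ^ (p - 1)) 0 = q.2 - q.1 ^ (p - 1) :=
    max_eq_left (sub_nonneg.2 ((critPoint_le_iff hp1 hy hu).1 h))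
  ext <;> simp [gradG, hfst, max_eq_right h]

theorem hasFDerivAt_G (hp0 : p ≠ 0) (hp1 : p < 1) (hq : q ∈ Ioi 0 ×ˢ Ioi 0) :
    HasFDerivAt (fun q : ℝ × ℝ => G p q.1 q.2) (gradG p q) q := by
  obtain ⟨hu, hy⟩ := hq
  have hquad : ∀ᶠ q' in 𝓝 q, q' ∈ Ioi (0 : ℝ) ×ˢ Ioi 0 :=
    (isOpen_Ioi.prod isOpen_Ioi).mem_nhds ⟨hu, hy⟩
  refine hasFDerivAt_of_eventuallyEq_of_le_of_ge (g := fun q => q.1 - critPoint p q.2)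
    (A := fun q => payoff p q.2 (critPoint p q.2)) (B := fun q => payoff p q.2 q.1)
    (continuousAt_fst.sub ((continuousAt_rpow_const _ _ (Or.inl (ne_of_gt hy))).comp
      continuousAt_snd)) (fun h => ?_) (fun h => ?_) ?_ ?_
  · rw [gradG_eq_of_le hp1 hu hy (sub_nonpos.1 h)]
    exact (hasDerivAt_payoff_critPoint hp0 hp1.ne hy).comp_hasFDerivAt q hasFDerivAt_snd
  · rw [gradG_eq_of_ge hp1 hu hy (sub_nonneg.1 h)]
    exact hasFDerivAt_payoff_snd_fst hp0 hu
  · filter_upwards [hquad] with q' ⟨hu', hy'⟩ h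
    rw [G_eq_payoff_max hp0 hp1 hu' hy', max_eq_left (sub_nonpos.1 h)]
  · filter_upwards [hquad] with q' ⟨hu', hy'⟩ h
    rw [G_eq_payoff_max hp0 hp1 hu' hy', max_eq_right (sub_nonneg.1 h)]

theorem continuousOn_gradG : ContinuousOn (gradG p) (Ioi 0 ×ˢ Ioi 0) := by
  have hu : ContinuousOn (fun q : ℝ × ℝ => q.1 ^ (p - 1)) (Ioi 0 ×ˢ Ioi 0) :=
    continuousOn_fst.rpow_const fun q hq => Or.inl (ne_of_gt hq.1)
  have hcrit : ContinuousOn (fun q : ℝ × ℝ => critPoint p q.2) (Ioi 0 ×ˢ Ioi 0) :=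
    continuousOn_snd.rpow_const fun q hq => Or.inl (ne_of_gt hq.2)
  exact (((continuousOn_snd.sub hu).sup continuousOn_const).neg.smul continuousOn_const).add
    ((hcrit.sup continuousOn_fst).neg.smul continuousOn_const)

end Plane

/-- `G` is continuously differentiable on `(0,∞) × (0,∞)` with
`∂_u G = -(y - u^(p-1))⁺` and `∂_y G = -max {y^(1/(p-1)), u}`. -/
theorem stmt_1 (p : ℝ) (hp0 : 0 < p) (hp1 : p < 1) :
    ContDiffOn ℝ 1 (fun q : ℝ × ℝ => G p q.1 q.2) (Ioi 0 ×ˢ Ioi 0) ∧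
    ∀ u y : ℝ, 0 < u → 0 < y →
      HasDerivAt (fun u' => G p u' y) (-(max (y - u ^ (p - 1)) 0)) u ∧
      HasDerivAt (fun y' => G p u y') (-(max (y ^ (1 / (p - 1))) u)) y := by
  have hG (q : ℝ × ℝ) (hq : q ∈ Ioi 0 ×ˢ Ioi 0) := hasFDerivAt_G hp0.ne' hp1 hq
  refine ⟨contDiffOn_one_of_hasFDerivAt (isOpen_Ioi.prod isOpen_Ioi) hG continuousOn_gradG,
    fun u y hu hy => ⟨?_, ?_⟩⟩
  · simpa [gradG, Function.comp_def] using
      (hG (u, y) ⟨hu, hy⟩).comp_hasDerivAt u ((hasDerivAt_id u).prodMk (hasDerivAt_const u y))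
  · simpa [gradG, critPoint, Function.comp_def] using
      (hG (u, y) ⟨hu, hy⟩).comp_hasDerivAt y ((hasDerivAt_const y u).prodMk (hasDerivAt_id y))
end

section
/- Let $0<p<1$, $\mu>0$, $\sigma>0$, $\beta>0$, $r>0$, $k\ge 0$, $l>0$, and $x_e\ge 0$ with $kx+l>0$ for all $x>x_e$. Let $V:(x_e,\infty)\to\mathbb{R}$ be twice continuously differentiable with $V'(x)>0$ and $V''(x)<0$ for all $x>x_e$, with $V'$ a bijection from $(x_e,\infty)$ onto $(0,\infty)$, and suppose $V$ satisfies, for all $x>x_e$, $\beta V(x)+\frac{\mu^2}{2\sigma^2}\frac{V'(x)^2}{V''(x)}-G(kx+l,\,V'(x))-rxV'(x)=0$. Set $x(y):=(V')^{-1}(y)$ and $v(y):=V(x(y))-x(y)y$ for $y>0$. Then $v$ is twice continuously differentiable on $(0,\infty)$ and satisfies, for all $y>0$, $\beta\big(v(y)-y\,v'(y)\big)-\frac{\mu^2}{2\sigma^2}y^2 v''(y)-G\big(-k\,v'(y)+l,\;y\big)+r\,y\,v'(y)=0$. -/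
/-! The dual function `v = V ∘ x - x · id` is the Legendre transform of `V`. By the envelope
theorem `v' = -x` (the terms coming from `x'` cancel because `V' (x y) = y`), and by the inverse
function theorem `v'' = -x' = -1 / V'' (x y)`. Substituting `x = x(y)` into the primal HJB equation
then turns it, term by term, into the dual equation. -/

open Real Set

open Filter Topology

theorem HasStrictDerivAt.hasDerivAt_of_rightInvOn {f g : ℝ → ℝ} {f' y : ℝ} {s t : Set ℝ}
    (hf : HasStrictDerivAt f f' (g y)) (hf' : f' ≠ 0) (hs : s ∈ 𝓝 (g y)) (ht : t ∈ 𝓝 y)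
    (hinj : InjOn f s) (hmaps : MapsTo g t s) (hinv : RightInvOn g f t) :
    HasDerivAt g f'⁻¹ y := by
  have hfg : f (g y) = y := hinv (mem_of_mem_nhds ht)
  have hleft : ∀ᶠ x in 𝓝 (g y), g (f x) = x := by
    have hft : ∀ᶠ x in 𝓝 (g y), f x ∈ t :=
      hf.hasDerivAt.continuousAt.preimage_mem_nhds (by rwa [hfg])
    filter_upwards [hs, hft] with x hxs hxt
    exact hinj (hmaps hxt) hxs (hinv hxt)
  simpa only [hfg] using (hf.to_local_left_inverse hf' hleft).hasDerivAt

section RightInverse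

variable {f g : ℝ → ℝ} {s t : Set ℝ}

theorem ContDiffOn.hasDerivAt_of_rightInvOn (hf : ContDiffOn ℝ 1 f s) (hs : IsOpen s)
    (ht : IsOpen t) (hf' : ∀ x ∈ s, deriv f x ≠ 0) (hinj : InjOn f s) (hmaps : MapsTo g t s)
    (hinv : RightInvOn g f t) {y : ℝ} (hy : y ∈ t) :
    HasDerivAt g (deriv f (g y))⁻¹ y :=
  ((hf.contDiffAt (hs.mem_nhds (hmaps hy))).hasStrictDerivAt one_ne_zero).hasDerivAt_of_rightInvOn
    (hf' _ (hmaps hy)) (hs.mem_nhds (hmaps hy)) (ht.mem_nhds hy) hinj hmaps hinv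

theorem ContDiffOn.contDiffOn_one_of_rightInvOn (hf : ContDiffOn ℝ 1 f s) (hs : IsOpen s)
    (ht : IsOpen t) (hf' : ∀ x ∈ s, deriv f x ≠ 0) (hinj : InjOn f s) (hmaps : MapsTo g t s)
    (hinv : RightInvOn g f t) : ContDiffOn ℝ 1 g t := by
  have hg := fun y (hy : y ∈ t) => hf.hasDerivAt_of_rightInvOn hs ht hf' hinj hmaps hinv hy
  rw [show (1 : WithTop ℕ∞) = 0 + 1 from rfl, contDiffOn_succ_iff_deriv_of_isOpen ht]
  refine ⟨fun y hy => (hg y hy).differentiableAt.differentiableWithinAt, by simp, ?_⟩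
  have hcont : ContinuousOn (fun y => (deriv f (g y))⁻¹) t :=
    ((hf.continuousOn_deriv_of_isOpen hs le_rfl).comp
      (fun y hy => (hg y hy).continuousAt.continuousWithinAt) hmaps).inv₀
      fun y hy => hf' _ (hmaps hy)
  exact contDiffOn_zero.mpr (hcont.congr fun y hy => (hg y hy).deriv)

end RightInverse

noncomputable def legendreDual (V g : ℝ → ℝ) (y : ℝ) : ℝ := V (g y) - g y * y

section LegendreDual

variable {V g : ℝ → ℝ} {t : Set ℝ}

theorem hasDerivAt_legendreDual {g' y : ℝ} (hV : HasDerivAt V y (g y)) (hg : HasDerivAt g g' y) :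
    HasDerivAt (legendreDual V g) (-g y) y := by
  have hVg : HasDerivAt (fun y => V (g y)) (y * g') y := hV.comp y hg
  have hgy : HasDerivAt (fun y => g y * y) (g' * y + g y * 1) y := hg.mul (hasDerivAt_id y)
  exact (hVg.sub hgy).congr_deriv (by ring)

theorem deriv_legendreDual_eqOn (ht : IsOpen t) (hV : ∀ y ∈ t, HasDerivAt V y (g y))
    (hg : DifferentiableOn ℝ g t) : EqOn (deriv (legendreDual V g)) (-g) t := fun y hy =>
  (hasDerivAt_legendreDual (hV y hy) (hg.differentiableAt (ht.mem_nhds hy)).hasDerivAt).deriv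

theorem contDiffOn_two_legendreDual (ht : IsOpen t) (hV : ∀ y ∈ t, HasDerivAt V y (g y))
    (hg : ContDiffOn ℝ 1 g t) : ContDiffOn ℝ 2 (legendreDual V g) t := by
  have hgd : DifferentiableOn ℝ g t := hg.differentiableOn one_ne_zero
  rw [show (2 : WithTop ℕ∞) = 1 + 1 from rfl, contDiffOn_succ_iff_deriv_of_isOpen ht]
  refine ⟨fun y hy => ?_, by simp, hg.neg.congr (deriv_legendreDual_eqOn ht hV hgd)⟩
  exact (hasDerivAt_legendreDual (hV y hy)
    (hgd.differentiableAt (ht.mem_nhds hy)).hasDerivAt).differentiableAt.differentiableWithinAt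

theorem deriv_deriv_legendreDual (ht : IsOpen t) (hV : ∀ y ∈ t, HasDerivAt V y (g y))
    (hg : DifferentiableOn ℝ g t) {y : ℝ} (hy : y ∈ t) :
    deriv (deriv (legendreDual V g)) y = -deriv g y := by
  have hev : deriv (legendreDual V g) =ᶠ[𝓝 y] -g :=
    eventually_of_mem (ht.mem_nhds hy) (deriv_legendreDual_eqOn ht hV hg)
  rw [hev.deriv_eq, deriv.neg']

end LegendreDual

theorem stmt_5_general (p μ σ β r k l xe : ℝ)
    (V : ℝ → ℝ) (hV : ContDiffOn ℝ 2 V (Ioi xe))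
    (hV'' : ∀ x ∈ Ioi xe, deriv (deriv V) x < 0)
    (hbij : BijOn (deriv V) (Ioi xe) (Ioi 0))
    (hHJB : ∀ x ∈ Ioi xe,
      β * V x + μ ^ 2 / (2 * σ ^ 2) * (deriv V x) ^ 2 / deriv (deriv V) x
        - G p (k * x + l) (deriv V x) - r * x * deriv V x = 0)
    (xinv : ℝ → ℝ)
    (hxinv : ∀ y ∈ Ioi (0 : ℝ), xinv y ∈ Ioi xe ∧ deriv V (xinv y) = y) :
    ContDiffOn ℝ 2 (fun y => V (xinv y) - xinv y * y) (Ioi 0) ∧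
    ∀ y ∈ Ioi (0 : ℝ),
      β * ((fun y' => V (xinv y') - xinv y' * y') y
            - y * deriv (fun y' => V (xinv y') - xinv y' * y') y)
        - μ ^ 2 / (2 * σ ^ 2) * y ^ 2 * deriv (deriv (fun y' => V (xinv y') - xinv y' * y')) y
        - G p (-k * deriv (fun y' => V (xinv y') - xinv y' * y') y + l) y
        + r * y * deriv (fun y' => V (xinv y') - xinv y' * y') y = 0 := by
  have hmaps : MapsTo xinv (Ioi 0) (Ioi xe) := fun y hy => (hxinv y hy).1
  have hinv : RightInvOn xinv (deriv V) (Ioi 0) := fun y hy => (hxinv y hy).2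
  have hf : ContDiffOn ℝ 1 (deriv V) (Ioi xe) := hV.deriv_of_isOpen isOpen_Ioi (by norm_num)
  have hf' : ∀ x ∈ Ioi xe, deriv (deriv V) x ≠ 0 := fun x hx => (hV'' x hx).ne
  have hVd : ∀ y ∈ Ioi (0 : ℝ), HasDerivAt V y (xinv y) := fun y hy => by
    simpa only [hinv hy] using ((hV.differentiableOn (by norm_num)).differentiableAt
      (isOpen_Ioi.mem_nhds (hmaps hy))).hasDerivAt
  have hx1 := hf.contDiffOn_one_of_rightInvOn isOpen_Ioi isOpen_Ioi hf' hbij.injOn hmaps hinv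
  have hxd := hx1.differentiableOn one_ne_zero
  rw [show (fun y' => V (xinv y') - xinv y' * y') = legendreDual V xinv from rfl]
  refine ⟨contDiffOn_two_legendreDual isOpen_Ioi hVd hx1, fun y hy => ?_⟩
  have hHJBy := hHJB (xinv y) (hmaps hy)
  rw [hinv hy] at hHJBy
  rw [deriv_deriv_legendreDual isOpen_Ioi hVd hxd hy,
    deriv_legendreDual_eqOn isOpen_Ioi hVd hxd hy,
    (hf.hasDerivAt_of_rightInvOn isOpen_Ioi isOpen_Ioi hf' hbij.injOn hmaps hinv hy).deriv]
  simp only [legendreDual, Pi.neg_apply, neg_mul_neg]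
  linear_combination hHJBy

/-- if `V` is a `C²` solution of the primal HJB equation with `V' > 0`,
`V'' < 0` and `V'` a bijection from `(x_e,∞)` onto `(0,∞)`, then the dual function
`v(y) = V(x(y)) - x(y) y`, where `x(y) = (V')⁻¹(y)`, is `C²` on `(0,∞)` and satisfies the
dual semilinear ODE. -/
theorem stmt_5 (p μ σ β r k l xe : ℝ) (hp0 : 0 < p) (hp1 : p < 1) (hμ : 0 < μ) (hσ : 0 < σ)
    (hβ : 0 < β) (hr : 0 < r) (hk : 0 ≤ k) (hl : 0 < l) (hxe : 0 ≤ xe)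
    (hkxl : ∀ x : ℝ, xe < x → 0 < k * x + l)
    (V : ℝ → ℝ) (hV : ContDiffOn ℝ 2 V (Ioi xe))
    (hV' : ∀ x ∈ Ioi xe, 0 < deriv V x)
    (hV'' : ∀ x ∈ Ioi xe, deriv (deriv V) x < 0)
    (hbij : BijOn (deriv V) (Ioi xe) (Ioi 0))
    (hHJB : ∀ x ∈ Ioi xe,
      β * V x + μ ^ 2 / (2 * σ ^ 2) * (deriv V x) ^ 2 / deriv (deriv V) x
        - G p (k * x + l) (deriv V x) - r * x * deriv V x = 0)
    (xinv : ℝ → ℝ)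
    (hxinv : ∀ y ∈ Ioi (0 : ℝ), xinv y ∈ Ioi xe ∧ deriv V (xinv y) = y) :
    ContDiffOn ℝ 2 (fun y => V (xinv y) - xinv y * y) (Ioi 0) ∧
    ∀ y ∈ Ioi (0 : ℝ),
      β * ((fun y' => V (xinv y') - xinv y' * y') y
            - y * deriv (fun y' => V (xinv y') - xinv y' * y') y)
        - μ ^ 2 / (2 * σ ^ 2) * y ^ 2 * deriv (deriv (fun y' => V (xinv y') - xinv y' * y')) y
        - G p (-k * deriv (fun y' => V (xinv y') - xinv y' * y') y + l) y
        + r * y * deriv (fun y' => V (xinv y') - xinv y' * y') y = 0 :=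
  stmt_5_general p μ σ β r k l xe V hV hV'' hbij hHJB xinv hxinv
end

section
/- Let $0<p<1$, $\mu>0$, $\sigma>0$, $\beta>0$, $l>0$, and $0\le k<r$. Suppose $v:(0,\infty)\to\mathbb{R}$ is three times continuously differentiable, convex, satisfies $v'(y)<-\frac{l}{r-k}$ for all $y>0$, and solves the dual ODE $\beta\big(v(y)-y\,v'(y)\big)-\frac{\mu^2}{2\sigma^2}y^2 v''(y)-G\big(-k\,v'(y)+l,\;y\big)+r\,y\,v'(y)=0$ for all $y>0$. Then $v''(y)>0$ for all $y>0$. -/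
open Real Set

open Filter Topology

/-!
By convexity `v'' ≥ 0`; suppose `v''(y₀) = 0`. With `u = -k v' + l` and
`L v (y) = β (v - y v') + r y v'`, the ODE reads `L v (y) - G(u(y), y) = A y² v''(y) ≥ 0`,
so the left side attains its minimum `0` at `y₀`.

If the constraint `c ≥ u` is active at `y₀`, then `G(u, y) ≥ u^p/p - u y` with equality at `y₀`,
so `L v - u^p/p + u y` is also minimal at `y₀`; its derivative there is `(r - k) v'(y₀) + l`,
which is negative by the hypothesis on `v'`. Otherwise `G(u, y) = (1-p)/p · y^(p/(p-1))` near
`y₀`, and since `v''` and `v'''` both vanish at `y₀` the second derivative of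
`L v - (1-p)/p · y^(p/(p-1))` at `y₀` is `y₀^(1/(p-1) - 1)/(p - 1) < 0`, contradicting minimality.
-/

lemma rpow_le_rpow_add_mul_sub {p c d : ℝ} (hp0 : 0 ≤ p) (hp1 : p ≤ 1) (hc : 0 ≤ c)
    (hd : 0 < d) : c ^ p ≤ d ^ p + p * d ^ (p - 1) * (c - d) := by
  have hbern := rpow_one_add_le_one_add_mul_self (s := c / d - 1)
    (by linarith [div_nonneg hc hd.le]) hp0 hp1
  rw [add_sub_cancel, div_rpow hc hd.le] at hbern
  have hdp : 0 < d ^ p := rpow_pos_of_pos hd p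
  calc c ^ p = c ^ p / d ^ p * d ^ p := (div_mul_cancel₀ _ hdp.ne').symm
    _ ≤ (1 + p * (c / d - 1)) * d ^ p := by gcongr
    _ = d ^ p + p * (d ^ p / d) * (c - d) := by field_simp
    _ = d ^ p + p * d ^ (p - 1) * (c - d) := by rw [rpow_sub_one hd.ne']

lemma rpow_div_sub_mul_le {p y c d : ℝ} (hp0 : 0 < p) (hp1 : p ≤ 1) (hc : 0 ≤ c) (hd : 0 < d) :
    c ^ p / p - c * y ≤ d ^ p / p - d * y + (d ^ (p - 1) - y) * (c - d) := by
  have h := rpow_le_rpow_add_mul_sub hp0.le hp1 hc hd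
  have : c ^ p / p ≤ d ^ p / p + d ^ (p - 1) * (c - d) := by
    rw [div_le_iff₀ hp0, add_mul, div_mul_cancel₀ _ hp0.ne']
    linarith
  linarith

/-- `sup_{c ≥ 0} (c^p/p - c y)`, attained at `c = y^(1/(p-1))`. -/
noncomputable def Gfree (p y : ℝ) : ℝ := (1 - p) / p * y ^ (p / (p - 1))

lemma rpow_one_div_sub_one_rpow_sub_one {p y : ℝ} (hp1 : p ≠ 1) (hy : 0 ≤ y) :
    (y ^ (1 / (p - 1))) ^ (p - 1) = y := by
  rw [← rpow_mul hy, one_div_mul_cancel (sub_ne_zero.2 hp1), rpow_one]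

lemma Gfree_eq {p y : ℝ} (hp0 : p ≠ 0) (hp1 : p ≠ 1) (hy : 0 < y) :
    Gfree p y = (y ^ (1 / (p - 1))) ^ p / p - y ^ (1 / (p - 1)) * y := by
  have hpow : (y ^ (1 / (p - 1))) ^ p = y ^ (p / (p - 1)) := by
    rw [← rpow_mul hy.le, one_div_mul_eq_div]
  have hmul : y ^ (1 / (p - 1)) * y = y ^ (p / (p - 1)) := by
    rw [← rpow_add_one hy.ne']
    congr 1
    field_simp
    ring
  rw [hpow, hmul, Gfree]
  field_simp

lemma rpow_div_sub_mul_le_Gfree {p y c : ℝ} (hp0 : 0 < p) (hp1 : p < 1) (hy : 0 < y)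
    (hc : 0 ≤ c) : c ^ p / p - c * y ≤ Gfree p y := by
  have h := rpow_div_sub_mul_le (y := y) hp0 hp1.le hc (rpow_pos_of_pos hy (1 / (p - 1)))
  rwa [rpow_one_div_sub_one_rpow_sub_one hp1.ne hy.le, sub_self, zero_mul, add_zero,
    ← Gfree_eq hp0.ne' hp1.ne hy] at h

lemma hasDerivAt_Gfree {p y : ℝ} (hp0 : p ≠ 0) (hp1 : p ≠ 1) (hy : 0 < y) :
    HasDerivAt (Gfree p) (-y ^ (1 / (p - 1))) y := by
  have hexp : p / (p - 1) - 1 = 1 / (p - 1) := by field_simp; ring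
  have h := ((hasDerivAt_rpow_const (p := p / (p - 1)) (Or.inl hy.ne')).const_mul
    ((1 - p) / p))
  refine h.congr_deriv ?_
  rw [hexp]
  field_simp
  ring

lemma bddAbove_G {p u y : ℝ} (hp0 : 0 < p) (hp1 : p < 1) (hy : 0 < y) (hu : 0 ≤ u) :
    BddAbove ((fun c : ℝ => c ^ p / p - c * y) '' {c : ℝ | u ≤ c}) := by
  refine ⟨Gfree p y, ?_⟩
  rintro _ ⟨c, hc, rfl⟩
  exact rpow_div_sub_mul_le_Gfree hp0 hp1 hy (hu.trans hc)

lemma le_G {p u y c : ℝ} (hp0 : 0 < p) (hp1 : p < 1) (hy : 0 < y) (hu : 0 ≤ u) (hc : u ≤ c) :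
    c ^ p / p - c * y ≤ G p u y :=
  le_csSup (bddAbove_G hp0 hp1 hy hu) ⟨c, hc, rfl⟩

lemma G_eq_Gfree {p u y : ℝ} (hp0 : 0 < p) (hp1 : p < 1) (hy : 0 < y) (hu : 0 ≤ u)
    (hle : u ≤ y ^ (1 / (p - 1))) : G p u y = Gfree p y := by
  refine le_antisymm (csSup_le ⟨_, u, le_refl u, rfl⟩ ?_) ?_
  · rintro _ ⟨c, hc, rfl⟩
    exact rpow_div_sub_mul_le_Gfree hp0 hp1 hy (hu.trans hc)
  · rw [Gfree_eq hp0.ne' hp1.ne hy]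
    exact le_G hp0 hp1 hy hu hle

lemma G_eq_of_rpow_le {p u y : ℝ} (hp0 : 0 < p) (hp1 : p < 1) (hy : 0 < y)
    (hle : y ^ (1 / (p - 1)) ≤ u) : G p u y = u ^ p / p - u * y := by
  have hu : 0 < u := (rpow_pos_of_pos hy _).trans_le hle
  have hup : u ^ (p - 1) ≤ y := by
    have := rpow_le_rpow_of_nonpos (rpow_pos_of_pos hy _) hle (by linarith : p - 1 ≤ 0)
    rwa [rpow_one_div_sub_one_rpow_sub_one hp1.ne hy.le] at this
  refine le_antisymm (csSup_le ⟨_, u, le_refl u, rfl⟩ ?_) (le_G hp0 hp1 hy hu.le le_rfl)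
  rintro _ ⟨c, hc, rfl⟩
  have h := rpow_div_sub_mul_le (y := y) hp0 hp1.le (hu.le.trans hc) hu
  nlinarith [mul_nonneg (sub_nonneg.2 hup) (sub_nonneg.2 (show u ≤ c from hc))]

lemma IsLocalMin.deriv_deriv_nonneg {f : ℝ → ℝ} {x : ℝ} (hmin : IsLocalMin f x)
    (hc : ContinuousAt f x) : 0 ≤ deriv (deriv f) x := by
  by_contra! hneg
  have hmax := isLocalMax_of_deriv_deriv_neg hneg hmin.deriv_eq_zero hc
  have hconst : f =ᶠ[𝓝 x] fun _ => f x :=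
    (hmin.and hmax).mono fun y hy => le_antisymm hy.2 hy.1
  have hderiv : deriv f =ᶠ[𝓝 x] fun _ => 0 :=
    hconst.eventuallyEq_nhds.mono fun y hy => by rw [hy.deriv_eq, deriv_const]
  rw [hderiv.deriv_eq, deriv_const] at hneg
  exact hneg.false

lemma ConvexOn.deriv_deriv_nonneg {f : ℝ → ℝ} {s : Set ℝ} {x : ℝ} (hf : ConvexOn ℝ s f)
    (hs : IsOpen s) (hd : DifferentiableOn ℝ f s) (hx : x ∈ s) : 0 ≤ deriv (deriv f) x := by
  have hmono := hf.monotoneOn_deriv fun y hy => hd.differentiableAt (hs.mem_nhds hy)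
  rw [← derivWithin_of_isOpen hs hx]
  exact hmono.derivWithin_nonneg

lemma ContDiffOn.hasDerivAt_deriv {f : ℝ → ℝ} {s : Set ℝ} {n : WithTop ℕ∞} {x : ℝ}
    (hf : ContDiffOn ℝ n f s) (hs : IsOpen s) (hn : n ≠ 0) (hx : x ∈ s) :
    HasDerivAt f (deriv f x) x :=
  ((hf.differentiableOn hn).differentiableAt (hs.mem_nhds hx)).hasDerivAt

noncomputable def firstOrderPart (β r : ℝ) (v : ℝ → ℝ) (y : ℝ) : ℝ :=
  β * (v y - y * deriv v y) + r * y * deriv v y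

lemma hasDerivAt_firstOrderPart {β r y a : ℝ} {v : ℝ → ℝ} (hv : HasDerivAt v (deriv v y) y)
    (hv' : HasDerivAt (deriv v) a y) :
    HasDerivAt (firstOrderPart β r v) (r * deriv v y + (r - β) * y * a) y := by
  have hyv : HasDerivAt (fun x => x * deriv v x) (1 * deriv v y + y * a) y :=
    (hasDerivAt_id' y).mul hv'
  have hry : HasDerivAt (fun x => r * x * deriv v x) (r * 1 * deriv v y + r * y * a) y :=
    ((hasDerivAt_id' y).const_mul r).mul hv'
  exact (((hv.sub hyv).const_mul β).add hry).congr_deriv (by ring)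

lemma firstOrderPart_sub_G_of_ode {p β r A u y : ℝ} {v : ℝ → ℝ}
    (hODE : β * (v y - y * deriv v y) - A * y ^ 2 * deriv (deriv v) y - G p u y
      + r * y * deriv v y = 0) :
    firstOrderPart β r v y - G p u y = A * y ^ 2 * deriv (deriv v) y := by
  rw [firstOrderPart]
  linarith

section DualODE

variable {p β r y₀ : ℝ} {v u : ℝ → ℝ}

lemma add_eq_zero_of_rpow_le (hp0 : 0 < p) (hp1 : p < 1) (hu : ∀ y ∈ Ioi 0, 0 ≤ u y)
    (hG : ∀ y ∈ Ioi 0, G p (u y) y ≤ firstOrderPart β r v y)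
    (hG₀ : G p (u y₀) y₀ = firstOrderPart β r v y₀) (hy₀ : 0 < y₀)
    (hle : y₀ ^ (1 / (p - 1)) ≤ u y₀) (hv : DifferentiableAt ℝ v y₀)
    (hv' : HasDerivAt (deriv v) 0 y₀) (hu' : HasDerivAt u 0 y₀) :
    r * deriv v y₀ + u y₀ = 0 := by
  set W : ℝ → ℝ := fun y => firstOrderPart β r v y - (u y ^ p / p - u y * y)
  have hmin : IsLocalMin W y₀ := by
    rw [G_eq_of_rpow_le hp0 hp1 hy₀ hle] at hG₀
    filter_upwards [isOpen_Ioi.mem_nhds hy₀] with y hy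
    linarith [hG y hy, le_G hp0 hp1 hy (hu y hy) (le_refl (u y))]
  have hu₀ : 0 < u y₀ := (rpow_pos_of_pos hy₀ _).trans_le hle
  have hup : HasDerivAt (fun y => u y ^ p) 0 y₀ := by
    simpa using hu'.rpow_const (p := p) (Or.inl hu₀.ne')
  have hW : HasDerivAt W (r * deriv v y₀ + u y₀) y₀ := by
    have h := (hasDerivAt_firstOrderPart (β := β) (r := r) hv.hasDerivAt hv').sub
      ((hup.div_const p).sub (hu'.mul (hasDerivAt_id y₀)))
    exact h.congr_deriv (by simp)
  rw [← hW.deriv, hmin.deriv_eq_zero]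

lemma not_hasDerivAt_deriv_deriv_zero_of_lt_rpow (hp0 : 0 < p) (hp1 : p < 1)
    (hv : ContDiffOn ℝ 2 v (Ioi 0)) (hu : ∀ y ∈ Ioi 0, 0 ≤ u y) (huc : ContinuousAt u y₀)
    (hG : ∀ y ∈ Ioi 0, G p (u y) y ≤ firstOrderPart β r v y)
    (hG₀ : G p (u y₀) y₀ = firstOrderPart β r v y₀) (hy₀ : 0 < y₀)
    (hlt : u y₀ < y₀ ^ (1 / (p - 1))) (hv' : HasDerivAt (deriv v) 0 y₀) :
    ¬ HasDerivAt (deriv (deriv v)) 0 y₀ := by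
  intro hv''
  set F : ℝ → ℝ := fun y => firstOrderPart β r v y - Gfree p y
  set F' : ℝ → ℝ := fun y =>
    r * deriv v y + (r - β) * y * deriv (deriv v) y + y ^ (1 / (p - 1))
  have hinterior : ∀ᶠ y in 𝓝 y₀, y ∈ Ioi 0 ∧ u y ≤ y ^ (1 / (p - 1)) :=
    (eventually_gt_nhds hy₀).and
      (huc.eventually_lt (continuousAt_rpow_const _ _ (Or.inl hy₀.ne')) hlt |>.mono
        fun _ h => h.le)
  have hmin : IsLocalMin F y₀ := by
    rw [G_eq_Gfree hp0 hp1 hy₀ (hu y₀ hy₀) hlt.le] at hG₀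
    filter_upwards [hinterior] with y ⟨hy, hle⟩
    linarith [hG y hy, G_eq_Gfree hp0 hp1 hy (hu y hy) hle]
  have hF : ∀ᶠ y in 𝓝 y₀, HasDerivAt F (F' y) y := by
    filter_upwards [isOpen_Ioi.mem_nhds hy₀] with y hy
    have hv₁ := hv.hasDerivAt_deriv isOpen_Ioi (by norm_num) hy
    have hv₂ := (hv.deriv_of_isOpen isOpen_Ioi (m := 1) (by norm_num)).hasDerivAt_deriv
      isOpen_Ioi (by norm_num) hy
    exact ((hasDerivAt_firstOrderPart hv₁ hv₂).sub
      (hasDerivAt_Gfree hp0.ne' hp1.ne hy)).congr_deriv (by ring)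
  have hF' : HasDerivAt F' (1 / (p - 1) * y₀ ^ (1 / (p - 1) - 1)) y₀ := by
    have h := ((hv'.const_mul r).add (((hasDerivAt_id y₀).const_mul (r - β)).mul hv'')).add
      (hasDerivAt_rpow_const (p := 1 / (p - 1)) (Or.inl hy₀.ne'))
    simp only [id_eq, hv'.deriv] at h
    exact h.congr_deriv (by ring)
  have hconcave : 1 / (p - 1) * y₀ ^ (1 / (p - 1) - 1) < 0 :=
    mul_neg_of_neg_of_pos (one_div_neg.2 (by linarith)) (rpow_pos_of_pos hy₀ _)
  have hF'' : deriv (deriv F) y₀ = 1 / (p - 1) * y₀ ^ (1 / (p - 1) - 1) := by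
    have hderiv : deriv F =ᶠ[𝓝 y₀] F' := hF.mono fun _ h => h.deriv
    rw [hderiv.deriv_eq, hF'.deriv]
  linarith [hmin.deriv_deriv_nonneg hF.self_of_nhds.continuousAt]

end DualODE

theorem stmt_7_general (p μ σ β r k l : ℝ) (hp0 : 0 < p) (hp1 : p < 1)
    (hl : 0 < l) (hk : 0 ≤ k) (hkr : k < r)
    (v : ℝ → ℝ) (hv : ContDiffOn ℝ 3 v (Ioi 0))
    (hconv : ConvexOn ℝ (Ioi 0) v)
    (hv' : ∀ y ∈ Ioi (0 : ℝ), deriv v y < -(l / (r - k)))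
    (hODE : ∀ y ∈ Ioi (0 : ℝ),
      β * (v y - y * deriv v y) - μ ^ 2 / (2 * σ ^ 2) * y ^ 2 * deriv (deriv v) y
        - G p (-k * deriv v y + l) y + r * y * deriv v y = 0) :
    ∀ y ∈ Ioi (0 : ℝ), 0 < deriv (deriv v) y := by
  have hv₁ : ContDiffOn ℝ 2 (deriv v) (Ioi 0) := hv.deriv_of_isOpen isOpen_Ioi (by norm_num)
  have hvd : DifferentiableOn ℝ v (Ioi 0) := hv.differentiableOn (by norm_num)
  have hconvex : ∀ y ∈ Ioi (0 : ℝ), 0 ≤ deriv (deriv v) y := fun y hy =>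
    hconv.deriv_deriv_nonneg isOpen_Ioi hvd hy
  have hdrift : ∀ y ∈ Ioi (0 : ℝ), (r - k) * deriv v y + l < 0 := fun y hy => by
    have h := hv' y hy
    rw [← neg_div, lt_div_iff₀' (sub_pos.2 hkr)] at h
    linarith
  have hu : ∀ y ∈ Ioi (0 : ℝ), 0 ≤ -k * deriv v y + l := fun y hy => by nlinarith [hdrift y hy]
  have hG : ∀ y ∈ Ioi (0 : ℝ), G p (-k * deriv v y + l) y ≤ firstOrderPart β r v y :=
    fun y hy => sub_nonneg.1 <| (firstOrderPart_sub_G_of_ode (hODE y hy)).symm ▸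
      mul_nonneg (by positivity) (hconvex y hy)
  intro y₀ hy₀
  refine (hconvex y₀ hy₀).lt_of_ne' fun h0 => ?_
  have hG₀ : G p (-k * deriv v y₀ + l) y₀ = firstOrderPart β r v y₀ :=
    (sub_eq_zero.1 (by rw [firstOrderPart_sub_G_of_ode (hODE y₀ hy₀), h0, mul_zero])).symm
  have hv'' : HasDerivAt (deriv v) 0 y₀ := h0 ▸ hv₁.hasDerivAt_deriv isOpen_Ioi (by norm_num) hy₀
  rcases le_or_gt (y₀ ^ (1 / (p - 1))) (-k * deriv v y₀ + l) with hle | hlt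
  · have h := add_eq_zero_of_rpow_le hp0 hp1 hu hG hG₀ hy₀ hle
      (hvd.differentiableAt (isOpen_Ioi.mem_nhds hy₀)) hv''
      (by simpa using (hv''.const_mul (-k)).add_const l)
    linarith [hdrift y₀ hy₀]
  · have hmin : IsLocalMin (deriv (deriv v)) y₀ := by
      filter_upwards [isOpen_Ioi.mem_nhds hy₀] with y hy
      exact h0 ▸ hconvex y hy
    refine not_hasDerivAt_deriv_deriv_zero_of_lt_rpow hp0 hp1 (hv.of_le (by norm_num)) hu
      ((hv₁.continuousOn.continuousAt (isOpen_Ioi.mem_nhds hy₀)).const_mul (-k) |>.add_const l)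
      hG hG₀ hy₀ hlt hv'' ?_
    have hv₂ : ContDiffOn ℝ 1 (deriv (deriv v)) (Ioi 0) :=
      hv₁.deriv_of_isOpen isOpen_Ioi (by norm_num)
    exact hmin.deriv_eq_zero ▸ hv₂.hasDerivAt_deriv isOpen_Ioi (by norm_num) hy₀

/-- a convex `C³` solution `v` of the dual ODE with `v'(y) < -l/(r-k)`
satisfies `v''(y) > 0` for all `y > 0`. -/
theorem stmt_7 (p μ σ β r k l : ℝ) (hp0 : 0 < p) (hp1 : p < 1) (hμ : 0 < μ) (hσ : 0 < σ)
    (hβ : 0 < β) (hl : 0 < l) (hk : 0 ≤ k) (hkr : k < r)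
    (v : ℝ → ℝ) (hv : ContDiffOn ℝ 3 v (Ioi 0))
    (hconv : ConvexOn ℝ (Ioi 0) v)
    (hv' : ∀ y ∈ Ioi (0 : ℝ), deriv v y < -(l / (r - k)))
    (hODE : ∀ y ∈ Ioi (0 : ℝ),
      β * (v y - y * deriv v y) - μ ^ 2 / (2 * σ ^ 2) * y ^ 2 * deriv (deriv v) y
        - G p (-k * deriv v y + l) y + r * y * deriv v y = 0) :
    ∀ y ∈ Ioi (0 : ℝ), 0 < deriv (deriv v) y :=
  stmt_7_general p μ σ β r k l hp0 hp1 hl hk hkr v hv hconv hv' hODE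
end

section
/- Let $0<p<1$, $0<k<\kappa$, $l>0$, $x_e>0$, and $x^*>x_e$. If $(k x^*+l)^{p-1}\le \frac{\kappa^{p-1}(x^*)^p}{x^*-x_e}$, then $x^*<\frac{x_e+(1-p)\left(\frac{k}{\kappa}\right)^{-p}\frac{l}{\kappa}}{1-\left(\frac{k}{\kappa}\right)^{1-p}}$. -/
open Real Set

/-- the upper bound on the free-boundary point `x*`. -/
theorem stmt_12 (p k κ l xe xs : ℝ) (hp0 : 0 < p) (hp1 : p < 1) (hk : 0 < k) (hkκ : k < κ)
    (hl : 0 < l) (hxe : 0 < xe) (hxs : xe < xs)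
    (h : (k * xs + l) ^ (p - 1) ≤ κ ^ (p - 1) * xs ^ p / (xs - xe)) :
    xs < (xe + (1 - p) * (k / κ) ^ (-p) * (l / κ)) / (1 - (k / κ) ^ (1 - p)) := by
  have hκ : 0 < κ := hk.trans hkκ
  have hxs0 : 0 < xs := hxe.trans hxs
  have hkxs : 0 < k * xs := mul_pos hk hxs0
  have hkl : 0 < k * xs + l := by linarith
  have hsub : 0 < xs - xe := by linarith
  -- Step 1: xs - xe ≤ κ^(p-1) * xs^p * (k*xs+l)^(1-p)
  have h1 : xs - xe ≤ κ ^ (p - 1) * xs ^ p * (k * xs + l) ^ (1 - p) := by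
    have h' : (xs - xe) * (k * xs + l) ^ (p - 1) ≤ κ ^ (p - 1) * xs ^ p := by
      rw [mul_comm]
      exact (le_div_iff₀ hsub).mp h
    have := mul_le_mul_of_nonneg_right h' (le_of_lt (rpow_pos_of_pos hkl (1 - p)))
    calc xs - xe = (xs - xe) * ((k * xs + l) ^ (p - 1) * (k * xs + l) ^ (1 - p)) := by
          rw [← rpow_add hkl]; norm_num
      _ = (xs - xe) * (k * xs + l) ^ (p - 1) * (k * xs + l) ^ (1 - p) := by ring
      _ ≤ κ ^ (p - 1) * xs ^ p * (k * xs + l) ^ (1 - p) := this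
  -- Step 2: Bernoulli
  have hs : (0:ℝ) < l / (k * xs) := div_pos hl hkxs
  have h2 : (k * xs + l) ^ (1 - p) <
      (k * xs) ^ (1 - p) + (1 - p) * (k * xs) ^ (-p) * l := by
    have hb : (1 + l / (k * xs)) ^ (1 - p) < 1 + (1 - p) * (l / (k * xs)) :=
      rpow_one_add_lt_one_add_mul_self (by linarith) hs.ne' (by linarith) (by linarith)
    have heq : k * xs + l = (k * xs) * (1 + l / (k * xs)) := by
      field_simp
    rw [heq, mul_rpow hkxs.le (by positivity)]
    have := mul_lt_mul_of_pos_left hb (rpow_pos_of_pos hkxs (1 - p))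
    refine this.trans_le (le_of_eq ?_)
    have hpow : (k * xs) ^ (1 - p) = (k * xs) ^ (-p) * (k * xs) := by
      rw [← rpow_add_one hkxs.ne' (-p)]; ring_nf
    rw [mul_add, mul_one, hpow]
    field_simp
  -- Step 3: combine
  have hκp : 0 < κ ^ (p - 1) * xs ^ p := mul_pos (rpow_pos_of_pos hκ _) (rpow_pos_of_pos hxs0 _)
  have h3 : xs - xe < κ ^ (p - 1) * xs ^ p * ((k * xs) ^ (1 - p) + (1 - p) * (k * xs) ^ (-p) * l) :=
    h1.trans_lt (mul_lt_mul_of_pos_left h2 hκp)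
  -- simplify RHS of h3
  have key : κ ^ (p - 1) * xs ^ p * ((k * xs) ^ (1 - p) + (1 - p) * (k * xs) ^ (-p) * l)
      = (k / κ) ^ (1 - p) * xs + (1 - p) * (k / κ) ^ (-p) * (l / κ) := by
    have e1 : xs ^ p * xs ^ (1 - p) = xs := by
      rw [← rpow_add hxs0]; norm_num
    have e2 : xs ^ p * xs ^ (-p) = 1 := by
      rw [← rpow_add hxs0]; norm_num
    have f1 : (k / κ) ^ (1 - p) = k ^ (1 - p) * (κ ^ (1 - p))⁻¹ := by
      rw [div_rpow hk.le hκ.le, div_eq_mul_inv]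
    have f2 : (k / κ) ^ (-p) = k ^ (-p) * (κ ^ (-p))⁻¹ := by
      rw [div_rpow hk.le hκ.le, div_eq_mul_inv]
    have f3 : (κ ^ (1 - p))⁻¹ = κ ^ (p - 1) := by
      rw [← rpow_neg hκ.le]; ring_nf
    have f4 : (κ ^ (-p))⁻¹ = κ ^ p := by
      rw [← rpow_neg hκ.le, neg_neg]
    have f5 : κ ^ (p - 1) * κ = κ ^ p := by
      rw [← rpow_add_one hκ.ne']; ring_nf
    rw [mul_rpow hk.le hxs0.le, mul_rpow hk.le hxs0.le, f1, f2, f3, f4]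
    have hκn := hκ.ne'
    field_simp
    linear_combination (κ ^ (p - 1) * k ^ (1 - p) * κ) * e1
      + ((1 - p) * k ^ (-p) * l * κ ^ (p - 1) * κ) * e2
      + ((1 - p) * k ^ (-p) * l) * f5
  rw [key] at h3
  -- conclude
  have hratio : (k / κ) ^ (1 - p) < 1 := by
    apply rpow_lt_one (by positivity) ((div_lt_one hκ).mpr hkκ) (by linarith)
  rw [lt_div_iff₀ (by linarith)]
  nlinarith [rpow_pos_of_pos (div_pos hk hκ) (1 - p)]
end

section
/- Let $0<p<1$, $h>0$, $x_e\ge 0$, and let $f:(x_e,\infty)\to\mathbb{R}$ be concave and differentiable with $\frac{h^{p-1}}{p}(x-x_e)^p\le f(x)\le \frac{h^{p-1}}{p}x^p$ for all $x>x_e$. Then $\liminf_{x\to+\infty} f'(x)\,x^{1-p}\ge h^{p-1}$. -/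
open Real Set Filter

/-- if a concave differentiable `f` on `(x_e,∞)` satisfies
`(h^(p-1)/p)(x-x_e)^p ≤ f(x) ≤ (h^(p-1)/p) x^p`, then
`liminf_{x→∞} f'(x) x^(1-p) ≥ h^(p-1)`. -/
theorem stmt_13 (p h xe : ℝ) (hp0 : 0 < p) (hp1 : p < 1) (hh : 0 < h) (hxe : 0 ≤ xe)
    (f : ℝ → ℝ) (hconc : ConcaveOn ℝ (Ioi xe) f)
    (hdiff : ∀ x ∈ Ioi xe, DifferentiableAt ℝ f x)
    (hlow : ∀ x ∈ Ioi xe, h ^ (p - 1) / p * (x - xe) ^ p ≤ f x)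
    (hup : ∀ x ∈ Ioi xe, f x ≤ h ^ (p - 1) / p * x ^ p) :
    h ^ (p - 1) ≤ liminf (fun x : ℝ => deriv f x * x ^ (1 - p)) atTop := by
  set C : ℝ := h ^ (p - 1) / p with hCdef
  have hC : 0 < C := div_pos (Real.rpow_pos_of_pos hh _) hp0
  -- upper bound for coboundedness
  have hub : ∀ᶠ x in atTop, deriv f x * x ^ (1 - p) ≤ 2 * C := by
    filter_upwards [eventually_ge_atTop (2 * (xe + 1)), eventually_gt_atTop (xe + 1),
      eventually_gt_atTop 0] with x hx2 hxy hx0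
    set y : ℝ := xe + 1 with hy
    have hyI : y ∈ Ioi xe := by simp [hy]
    have hxI : x ∈ Ioi xe := by
      simp only [mem_Ioi]
      linarith
    have hs := hconc.deriv_le_slope hyI hxI hxy (hdiff x hxI)
    rw [slope_def_field] at hs
    have hfy : 0 < f y := by
      have := hlow y hyI
      have : C * (y - xe) ^ p ≤ f y := this
      have h1 : (y - xe : ℝ) = 1 := by simp [hy]
      rw [h1, Real.one_rpow] at this
      linarith
    have hfx : f x ≤ C * x ^ p := hup x hxI
    have hden : 0 < x - y := by linarith
    have hxhalf : x / 2 ≤ x - y := by simp [hy] at *; linarith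
    have h5 : deriv f x ≤ C * x ^ p / (x / 2) := by
      calc deriv f x ≤ (f x - f y) / (x - y) := hs
        _ ≤ C * x ^ p / (x - y) := by
            apply (div_le_div_iff_of_pos_right hden).2
            linarith
        _ ≤ C * x ^ p / (x / 2) := by
            apply div_le_div_of_nonneg_left (by positivity) (by linarith) hxhalf
    have h6 : deriv f x * x ^ (1 - p) ≤ C * x ^ p / (x / 2) * x ^ (1 - p) :=
      mul_le_mul_of_nonneg_right h5 (Real.rpow_nonneg hx0.le _)
    have e3 : x ^ p * x ^ (1 - p) = x := by
      rw [← Real.rpow_add hx0]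
      norm_num
    calc deriv f x * x ^ (1 - p) ≤ C * x ^ p / (x / 2) * x ^ (1 - p) := h6
      _ = 2 * C * (x ^ p * x ^ (1 - p)) / x := by ring
      _ = 2 * C := by rw [e3]; field_simp
  have hcb : IsCoboundedUnder (· ≥ ·) atTop (fun x : ℝ => deriv f x * x ^ (1 - p)) :=
    isCoboundedUnder_ge_of_eventually_le atTop hub
  -- main eventual lower bound
  have key : ∀ ε : ℝ, 0 < ε →
      ∀ᶠ x in atTop, h ^ (p - 1) - ε ≤ deriv f x * x ^ (1 - p) := by
    intro ε hε
    -- choose t > 1 with C * ((t^p - 1)/(t - 1)) > h^(p-1) - ε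
    have hder : HasDerivAt (fun s : ℝ => s ^ p) p 1 := by
      have := Real.hasDerivAt_rpow_const (x := (1 : ℝ)) (p := p) (Or.inl one_ne_zero)
      simpa using this
    have hslope : Tendsto (fun s : ℝ => (s ^ p - 1) / (s - 1)) (nhdsWithin 1 (Ioi 1)) (nhds p) := by
      have h1 := hasDerivAt_iff_tendsto_slope.1 hder
      have h2 := h1.mono_left (nhdsWithin_mono 1 (fun s hs => ne_of_gt hs))
      refine h2.congr fun s => ?_
      simp [slope_def_field, Real.one_rpow]
    have hCp : C * p = h ^ (p - 1) := div_mul_cancel₀ _ hp0.ne'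
    have htC : Tendsto (fun s : ℝ => C * ((s ^ p - 1) / (s - 1))) (nhdsWithin 1 (Ioi 1))
        (nhds (h ^ (p - 1))) := by
      rw [← hCp]
      exact hslope.const_mul C
    have hlt : h ^ (p - 1) - ε < h ^ (p - 1) := by linarith
    obtain ⟨t, ht2, ht1⟩ :=
      ((htC.eventually (eventually_gt_nhds hlt)).and self_mem_nhdsWithin).exists
    have ht1 : (1 : ℝ) < t := ht1
    -- the comparison function g
    have hx0' : Tendsto (fun x : ℝ => xe / x) atTop (nhds 0) :=
      Tendsto.div_atTop tendsto_const_nhds tendsto_id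
    have hb1 : Tendsto (fun x : ℝ => t - xe / x) atTop (nhds t) := by
      simpa using tendsto_const_nhds.sub hx0'
    have hb2 : Tendsto (fun x : ℝ => (t - xe / x) ^ p) atTop (nhds (t ^ p)) :=
      ((Real.continuousAt_rpow_const t p (Or.inr hp0.le)).tendsto).comp hb1
    have hg : Tendsto (fun x : ℝ => C * (((t - xe / x) ^ p - 1) / (t - 1))) atTop
        (nhds (C * ((t ^ p - 1) / (t - 1)))) :=
      (((hb2.sub tendsto_const_nhds).div_const (t - 1))).const_mul C
    have hev1 : ∀ᶠ x in atTop,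
        h ^ (p - 1) - ε < C * (((t - xe / x) ^ p - 1) / (t - 1)) :=
      hg.eventually (eventually_gt_nhds ht2)
    filter_upwards [hev1, eventually_gt_atTop xe, eventually_gt_atTop 0] with x hx1 hxxe hx0
    have hxI : x ∈ Ioi xe := hxxe
    have hxtx : x < t * x := by nlinarith
    have htxI : t * x ∈ Ioi xe := lt_trans hxxe hxtx
    have hs := hconc.slope_le_deriv hxI htxI hxtx (hdiff x hxI)
    rw [slope_def_field] at hs
    have hnum : C * (t * x - xe) ^ p - C * x ^ p ≤ f (t * x) - f x := by
      have l1 := hlow (t * x) htxI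
      have l2 := hup x hxI
      linarith
    have hden : 0 < t * x - x := by linarith
    have h5 : (C * (t * x - xe) ^ p - C * x ^ p) / (t * x - x) ≤ deriv f x :=
      le_trans ((div_le_div_iff_of_pos_right hden).2 hnum) hs
    have h6 : (C * (t * x - xe) ^ p - C * x ^ p) / (t * x - x) * x ^ (1 - p)
        ≤ deriv f x * x ^ (1 - p) :=
      mul_le_mul_of_nonneg_right h5 (Real.rpow_nonneg hx0.le _)
    have htxe : 0 < t * x - xe := by linarith
    have hpos : 0 < t - xe / x := by
      rw [sub_pos, div_lt_iff₀ hx0]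
      linarith
    have e1 : t * x - xe = (t - xe / x) * x := by field_simp
    have e2 : (t * x - xe) ^ p = (t - xe / x) ^ p * x ^ p := by
      rw [e1, Real.mul_rpow hpos.le hx0.le]
    have e3 : x ^ p * x ^ (1 - p) = x := by
      rw [← Real.rpow_add hx0]; norm_num
    have heq : (C * (t * x - xe) ^ p - C * x ^ p) / (t * x - x) * x ^ (1 - p)
        = C * (((t - xe / x) ^ p - 1) / (t - 1)) := by
      have htx' : t * x - x = (t - 1) * x := by ring
      calc (C * (t * x - xe) ^ p - C * x ^ p) / (t * x - x) * x ^ (1 - p)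
          = C * ((t - xe / x) ^ p - 1) * (x ^ p * x ^ (1 - p)) / (t * x - x) := by
            rw [e2]; ring
        _ = C * ((t - xe / x) ^ p - 1) * x / ((t - 1) * x) := by rw [e3, htx']
        _ = C * (((t - xe / x) ^ p - 1) / (t - 1)) := by
            have ht0 : t - 1 ≠ 0 := by linarith
            field_simp
    linarith [heq ▸ h6, hx1]
  refine le_of_forall_sub_le fun ε hε => ?_
  exact le_liminf_of_le hcb (key ε hε)
end

section
/- Let $0<p<1$, $l>0$, $x_e\ge 0$, and $0<h<k$. Let $f:(x_e,\infty)\to\mathbb{R}$ be concave and differentiable with $f'(x)>0$ and $\frac{h^{p-1}}{p}(x-x_e)^p\le f(x)\le \frac{h^{p-1}}{p}x^p$ for all $x>x_e$. Then there exists $x_3>x_e$ such that $f'(x)^{1/(p-1)}<kx+l$ for all $x>x_3$. -/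
/-!
By concavity, `f'(x)` is at least the slope of `f` over `[x, c x]`. The two-sided bounds make
this slope at least `A ((c - xₑ/x)^p - 1) / (c - 1) · x^(p-1)` with `A = h^(p-1)/p`, and the
factor `((c - xₑ/x)^p - 1) / (c - 1)` tends to `(c^p - 1)/(c - 1)`, which is close to `p` for
`c` near `1`. Since `k^(p-1) < h^(p-1) = A p`, this gives `f'(x) > (k x)^(p-1)` for large `x`,
and raising to the negative power `1/(p-1)` reverses the inequality.
-/

open Real Set Filter Topology

lemma exists_one_lt_mul_sub_one_lt_rpow_sub_one {p q : ℝ} (hq : q < p) :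
    ∃ c : ℝ, 1 < c ∧ q * (c - 1) < c ^ p - 1 := by
  have hderiv : HasDerivWithinAt (fun x : ℝ => x ^ p) p (Ioi 1) 1 := by
    simpa using
      (hasDerivAt_rpow_const (x := (1 : ℝ)) (p := p) (Or.inl one_ne_zero)).hasDerivWithinAt
  have hslope : ∀ᶠ c in 𝓝[>] (1 : ℝ), q < slope (fun x : ℝ => x ^ p) 1 c :=
    (hasDerivWithinAt_iff_tendsto_slope' (lt_irrefl 1)).1 hderiv (Ioi_mem_nhds hq)
  obtain ⟨c, hqc, hc⟩ := (hslope.and self_mem_nhdsWithin).exists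
  refine ⟨c, hc, ?_⟩
  rwa [slope_def_field, one_rpow, lt_div_iff₀ (sub_pos.2 hc)] at hqc

lemma ConcaveOn.eventually_mul_rpow_lt_deriv {p A m xe : ℝ} {f : ℝ → ℝ} (hA : 0 < A)
    (hm : m < A * p) (hconc : ConcaveOn ℝ (Ioi xe) f)
    (hdiff : ∀ x ∈ Ioi xe, DifferentiableAt ℝ f x)
    (hlow : ∀ x ∈ Ioi xe, A * (x - xe) ^ p ≤ f x) (hup : ∀ x ∈ Ioi xe, f x ≤ A * x ^ p) :
    ∀ᶠ x in atTop, m * x ^ (p - 1) < deriv f x := by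
  obtain ⟨c, hc, hcp⟩ := exists_one_lt_mul_sub_one_lt_rpow_sub_one
    (show m / A < p by rwa [div_lt_iff₀' hA])
  have hc0 : 0 < c := one_pos.trans hc
  have hlim : Tendsto (fun x : ℝ => (c - xe / x) ^ p) atTop (𝓝 (c ^ p)) := by
    have : Tendsto (fun x : ℝ => c - xe / x) atTop (𝓝 c) := by
      simpa using tendsto_const_nhds.sub
        ((tendsto_const_nhds (x := xe)).div_atTop (tendsto_id (α := ℝ)))
    exact ((continuousAt_rpow_const c p (Or.inl hc0.ne')).tendsto).comp this
  have hcp' : m / A * (c - 1) + 1 < c ^ p := by linarith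
  filter_upwards [hlim.eventually (eventually_gt_nhds hcp'),
    eventually_gt_atTop (0 : ℝ), eventually_gt_atTop xe] with x hx hx0 hxe
  have hxcx : x < c * x := by nlinarith
  have hcx : c * x ∈ Ioi xe := hxe.trans hxcx
  have hsplit : (c * x - xe) ^ p = x ^ p * (c - xe / x) ^ p := by
    rw [← mul_rpow hx0.le (by rw [sub_nonneg, div_le_iff₀ hx0]; nlinarith)]
    congr 1
    field_simp
  have hgain : m * (c - 1) * x ^ p < f (c * x) - f x := calc
      m * (c - 1) * x ^ p = A * x ^ p * (m / A * (c - 1) + 1 - 1) := by field_simp; ring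
      _ < A * x ^ p * ((c - xe / x) ^ p - 1) := by gcongr
      _ = A * (c * x - xe) ^ p - A * x ^ p := by rw [hsplit]; ring
      _ ≤ f (c * x) - f x := by linarith [hlow _ hcx, hup _ hxe]
  calc m * x ^ (p - 1) = m * (c - 1) * x ^ p / (c * x - x) := by
        rw [rpow_sub_one hx0.ne']
        field_simp [(sub_pos.2 hc).ne']
    _ < (f (c * x) - f x) / (c * x - x) := by gcongr
    _ ≤ deriv f x := by
        simpa [slope_def_field] using hconc.slope_le_deriv hxe hcx hxcx (hdiff x hxe)

theorem stmt_14_general (p h k l xe : ℝ) (hp0 : 0 < p) (hp1 : p < 1) (hl : 0 < l)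
    (hh : 0 < h) (hhk : h < k)
    (f : ℝ → ℝ) (hconc : ConcaveOn ℝ (Ioi xe) f)
    (hdiff : ∀ x ∈ Ioi xe, DifferentiableAt ℝ f x)
    (hlow : ∀ x ∈ Ioi xe, h ^ (p - 1) / p * (x - xe) ^ p ≤ f x)
    (hup : ∀ x ∈ Ioi xe, f x ≤ h ^ (p - 1) / p * x ^ p) :
    ∃ x₃ : ℝ, xe < x₃ ∧ ∀ x : ℝ, x₃ < x → (deriv f x) ^ (1 / (p - 1)) < k * x + l := by
  have hk : 0 < k := hh.trans hhk
  have hp1' : p - 1 < 0 := by linarith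
  have hm : k ^ (p - 1) < h ^ (p - 1) / p * p := by
    rw [div_mul_cancel₀ _ hp0.ne']
    exact rpow_lt_rpow_of_neg hh hhk hp1'
  obtain ⟨x₃, hx₃⟩ := ((hconc.eventually_mul_rpow_lt_deriv (by positivity) hm hdiff hlow hup).and
    ((eventually_gt_atTop 0).and (eventually_gt_atTop xe))).exists_forall_of_atTop
  refine ⟨x₃, (hx₃ x₃ le_rfl).2.2, fun x hx => ?_⟩
  obtain ⟨hderiv, hx0, -⟩ := hx₃ x hx.le
  rw [← mul_rpow hk.le hx0.le] at hderiv
  calc deriv f x ^ (1 / (p - 1)) < ((k * x) ^ (p - 1)) ^ (1 / (p - 1)) :=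
        rpow_lt_rpow_of_neg (by positivity) hderiv (one_div_neg.2 hp1')
    _ = k * x := by rw [← rpow_mul (by positivity), mul_one_div_cancel hp1'.ne, rpow_one]
    _ < k * x + l := by linarith

/-- if `0 < h < k` and the concave differentiable `f` on `(x_e,∞)` has
positive derivative and satisfies `(h^(p-1)/p)(x-x_e)^p ≤ f(x) ≤ (h^(p-1)/p) x^p`, then
`f'(x)^(1/(p-1)) < k x + l` for all sufficiently large `x`. -/
theorem stmt_14 (p h k l xe : ℝ) (hp0 : 0 < p) (hp1 : p < 1) (hl : 0 < l) (hxe : 0 ≤ xe)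
    (hh : 0 < h) (hhk : h < k)
    (f : ℝ → ℝ) (hconc : ConcaveOn ℝ (Ioi xe) f)
    (hdiff : ∀ x ∈ Ioi xe, DifferentiableAt ℝ f x)
    (hpos : ∀ x ∈ Ioi xe, 0 < deriv f x)
    (hlow : ∀ x ∈ Ioi xe, h ^ (p - 1) / p * (x - xe) ^ p ≤ f x)
    (hup : ∀ x ∈ Ioi xe, f x ≤ h ^ (p - 1) / p * x ^ p) :
    ∃ x₃ : ℝ, xe < x₃ ∧ ∀ x : ℝ, x₃ < x → (deriv f x) ^ (1 / (p - 1)) < k * x + l :=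
  stmt_14_general p h k l xe hp0 hp1 hl hh hhk f hconc hdiff hlow hup
end

section
/- Let $0<p<1$, $l>0$, $x_e>0$, and $0<k<\kappa$. Let $f:(x_e,\infty)\to\mathbb{R}$ be differentiable with $0<f'(x)\le \frac{\kappa^{p-1}x^p}{x-x_e}$ for all $x>x_e$. Then there exists $x_2>x_e$ such that $f'(x)^{1/(p-1)}>kx+l$ for all $x>x_2$. -/
open Real Set

/-- if `0 < k < κ` and the differentiable `f` on `(x_e,∞)` satisfies
`0 < f'(x) ≤ κ^(p-1) x^p / (x - x_e)`, then `f'(x)^(1/(p-1)) > k x + l` for all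
sufficiently large `x`. -/
theorem stmt_15 (p k κ l xe : ℝ) (hp0 : 0 < p) (hp1 : p < 1) (hl : 0 < l) (hxe : 0 < xe)
    (hk : 0 < k) (hkκ : k < κ)
    (f : ℝ → ℝ) (hdiff : ∀ x ∈ Ioi xe, DifferentiableAt ℝ f x)
    (hpos : ∀ x ∈ Ioi xe, 0 < deriv f x)
    (hup : ∀ x ∈ Ioi xe, deriv f x ≤ κ ^ (p - 1) * x ^ p / (x - xe)) :
    ∃ x₂ : ℝ, xe < x₂ ∧ ∀ x : ℝ, x₂ < x → k * x + l < (deriv f x) ^ (1 / (p - 1)) := by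
  set q : ℝ := 1 / (p - 1) with hq
  have hp1' : p - 1 < 0 := by linarith
  have hq0 : q < 0 := div_neg_of_pos_of_neg one_pos hp1'
  have hκ0 : (0:ℝ) < κ := hk.trans hkκ
  set c0 : ℝ := (k + κ) / (2 * κ) with hc0
  have hc0pos : 0 < c0 := by positivity
  have hc0lt : c0 < 1 := by rw [hc0, div_lt_one (by positivity)]; linarith
  set c : ℝ := c0 ^ (1 - p) with hc
  have hcpos : 0 < c := rpow_pos_of_pos hc0pos _
  have hclt : c < 1 := by
    calc c < 1 ^ (1 - p) := Real.rpow_lt_rpow hc0pos.le hc0lt (by linarith)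
    _ = 1 := Real.one_rpow _
  refine ⟨max (xe / (1 - c)) (2 * l / (κ - k)), ?_, ?_⟩
  · have : xe < xe / (1 - c) := by
      rw [lt_div_iff₀ (by linarith)]
      nlinarith
    exact this.trans_le (le_max_left _ _)
  · intro x hx
    have hx1 : xe / (1 - c) < x := (le_max_left _ _).trans_lt hx
    have hx2 : 2 * l / (κ - k) < x := (le_max_right _ _).trans_lt hx
    have hxe' : xe < x := by
      have : xe < xe / (1 - c) := by rw [lt_div_iff₀ (by linarith)]; nlinarith
      linarith
    have hx0 : 0 < x := hxe.trans hxe'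
    have hxxe : 0 < x - xe := by linarith
    have hcx : c * x ≤ x - xe := by
      rw [div_lt_iff₀ (by linarith)] at hx1
      nlinarith
    have hxmem : x ∈ Ioi xe := hxe'
    have hd0 : 0 < deriv f x := hpos x hxmem
    have hB0 : 0 < κ ^ (p - 1) * x ^ p / (x - xe) := by
      have := rpow_pos_of_pos hκ0 (p - 1)
      have := rpow_pos_of_pos hx0 p
      positivity
    have h1 : (κ ^ (p - 1) * x ^ p / (x - xe)) ^ q ≤ (deriv f x) ^ q :=
      Real.rpow_le_rpow_of_nonpos hd0 (hup x hxmem) hq0.le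
    -- rewrite the left side
    have hBq : (κ ^ (p - 1) * x ^ p / (x - xe)) ^ q
        = κ * x ^ (p * q) * (x - xe) ^ (-q) := by
      have hpq1 : (p - 1) * q = 1 := by
        rw [hq, mul_one_div]; exact div_self (by linarith)
      rw [Real.div_rpow (by positivity) hxxe.le, Real.mul_rpow (by positivity) (by positivity),
        ← Real.rpow_mul hκ0.le, ← Real.rpow_mul hx0.le, hpq1, Real.rpow_one,
        div_eq_mul_inv, ← Real.rpow_neg hxxe.le]
    have hkey : κ * c0 * x ≤ κ * x ^ (p * q) * (x - xe) ^ (-q) := by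
      have hrq : 0 < -q := by linarith
      have hle : (c * x) ^ (-q) ≤ (x - xe) ^ (-q) :=
        Real.rpow_le_rpow (by positivity) hcx hrq.le
      have hcq : (c * x) ^ (-q) = c0 * x ^ (-q) := by
        rw [Real.mul_rpow hcpos.le hx0.le, hc, ← Real.rpow_mul hc0pos.le]
        have hpq1 : (p - 1) * q = 1 := by rw [hq, mul_one_div]; exact div_self (by linarith)
        have : (1 - p) * -q = 1 := by linear_combination hpq1
        rw [this, Real.rpow_one]
      have hxx : x ^ (p * q) * x ^ (-q) = x := by
        have hpq1 : (p - 1) * q = 1 := by rw [hq, mul_one_div]; exact div_self (by linarith)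
        rw [← Real.rpow_add hx0, show p * q + -q = 1 by linear_combination hpq1,
          Real.rpow_one]
      calc κ * c0 * x = κ * (x ^ (p * q) * (c0 * x ^ (-q))) := by
            rw [show x ^ (p*q) * (c0 * x ^ (-q)) = c0 * (x ^ (p*q) * x ^ (-q)) by ring, hxx]; ring
        _ ≤ κ * (x ^ (p * q) * (x - xe) ^ (-q)) := by
            have hxpq : 0 < x ^ (p * q) := rpow_pos_of_pos hx0 _
            rw [← hcq]
            exact mul_le_mul_of_nonneg_left (mul_le_mul_of_nonneg_left hle hxpq.le) hκ0.le
        _ = κ * x ^ (p * q) * (x - xe) ^ (-q) := by ring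
    have hfin : k * x + l < κ * c0 * x := by
      have hκc0 : κ * c0 = (k + κ) / 2 := by rw [hc0]; field_simp
      rw [hκc0]
      rw [div_lt_iff₀ (by linarith)] at hx2
      nlinarith
    calc k * x + l < κ * c0 * x := hfin
      _ ≤ κ * x ^ (p * q) * (x - xe) ^ (-q) := hkey
      _ = (κ ^ (p - 1) * x ^ p / (x - xe)) ^ q := hBq.symm
      _ ≤ (deriv f x) ^ q := h1
end

section
/- Let $\mu>0$, $\sigma>0$, $r>0$, $\beta>0$, $l>0$, $0<p<1$, and suppose $\kappa>0$ where $\kappa:=\frac{\beta-p\left(\frac{\mu^2}{2\sigma^2(1-p)}+r\right)}{1-p}$. Let $\lambda_1<0$ and $\lambda_2>1$ be the two roots of $f(\lambda):=-\frac{\mu^2}{2\sigma^2}\lambda(\lambda-1)+(r-\beta)\lambda+\beta$, and set $C:=\left(\frac{\lambda_1-1}{r}-\frac{\lambda_1}{\beta p}+\frac{(1-p)\lambda_1}{p\kappa}+\frac{1}{\kappa}\right)\frac{l^{\,p+\lambda_2(1-p)}}{\lambda_2-\lambda_1}$ and $D:=\left(\frac{\lambda_2-1}{r}-\frac{\lambda_2}{\beta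 p}+\frac{(1-p)\lambda_2}{p\kappa}+\frac{1}{\kappa}\right)\frac{l^{\,p+\lambda_1(1-p)}}{\lambda_2-\lambda_1}$. Define $v:(0,\infty)\to\mathbb{R}$ by $v(y)=C\,y^{\lambda_2}+\frac{1-p}{p\kappa}\,y^{p/(p-1)}$ for $0<y\le l^{p-1}$ and $v(y)=D\,y^{\lambda_1}+\frac{l^p}{\beta p}-\frac{l}{r}\,y$ for $y\ge l^{p-1}$. Then $v$ is well-defined (the two formulas agree at $y=l^{p-1}$), continuously differentiable on $(0,\infty)$, and satisfies $-\frac{\mu^2}{2\sigma^2}y^2 v''(y)+(r-\beta)y\,v'(y)+\beta\,v(y)=\frac{1-p}{p}\,y^{p/(p-1)}$ for $0<y<l^{p-1}$ and $-\frac{\mu^2}{2\sigma^2}y^2 v''(y)+(r-\beta)y\,v'(y)+\beta\,v(y)=\frac{l^p}{p}-l\,y$ for $y>l^{p-1}$. -/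
open Real Set Filter Topology Finset

/-!
The Euler operator `L u = -a y² u'' + b y u' + c u` acts diagonally on powers:
`L[y^e] = f(e) y^e` with `f(e) = -a e (e - 1) + b e + c`. Since `f(λ₁) = f(λ₂) = 0`,
`f(p/(p-1)) = κ`, `f(0) = β` and `f(1) = r`, each of the two pieces of `v` solves its ODE.
The constants `C`, `D` solve the linear system expressing value matching and smooth fit at
`y₀ = l^(p-1)`; two `C¹` pieces that agree to first order at `y₀` glue to a `C¹` function.
-/

def eulerChar (a b c e : ℝ) : ℝ := -a * e * (e - 1) + b * e + c

noncomputable def eulerOp (a b c : ℝ) (u : ℝ → ℝ) (y : ℝ) : ℝ :=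
  -a * y ^ 2 * deriv (deriv u) y + b * y * deriv u y + c * u y

noncomputable def powSum {ι : Type*} (s : Finset ι) (k e : ι → ℝ) (y : ℝ) : ℝ :=
  ∑ i ∈ s, k i * y ^ e i

theorem Filter.EventuallyEq.eulerOp_eq {a b c y : ℝ} {u w : ℝ → ℝ} (h : u =ᶠ[𝓝 y] w) :
    eulerOp a b c u y = eulerOp a b c w y := by
  simp only [eulerOp, h.deriv.deriv_eq, h.deriv_eq, h.eq_of_nhds]

section PowSum

variable {ι : Type*} (s : Finset ι) (k e : ι → ℝ) {y : ℝ}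

theorem hasDerivAt_powSum (hy : 0 < y) :
    HasDerivAt (powSum s k e) (powSum s (fun i => k i * e i) (fun i => e i - 1) y) y :=
  HasDerivAt.fun_sum fun i _ => by
    simpa only [mul_assoc] using (hasDerivAt_rpow_const (Or.inl hy.ne')).const_mul (k i)

theorem continuousOn_powSum : ContinuousOn (powSum s k e) (Ioi 0) :=
  fun _ hy => (hasDerivAt_powSum s k e hy).continuousAt.continuousWithinAt

theorem eulerOp_powSum (a b c : ℝ) (hy : 0 < y) :
    eulerOp a b c (powSum s k e) y = ∑ i ∈ s, eulerChar a b c (e i) * k i * y ^ e i := by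
  have hderiv : deriv (powSum s k e) =ᶠ[𝓝 y]
      powSum s (fun i => k i * e i) (fun i => e i - 1) :=
    (eventually_gt_nhds hy).mono fun z hz => (hasDerivAt_powSum s k e hz).deriv
  rw [eulerOp, hderiv.deriv_eq, (hasDerivAt_powSum _ _ _ hy).deriv, hderiv.eq_of_nhds]
  simp only [powSum, mul_sum, ← sum_add_distrib]
  refine sum_congr rfl fun i _ => ?_
  rw [rpow_sub hy, rpow_sub hy, rpow_one, eulerChar]
  field_simp

theorem eulerOp_powSum_two {a b c k₁ k₂ e₁ e₂ : ℝ} (hy : 0 < y) (he₁ : eulerChar a b c e₁ = 0) :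
    eulerOp a b c (powSum univ ![k₁, k₂] ![e₁, e₂]) y = eulerChar a b c e₂ * k₂ * y ^ e₂ := by
  simp [eulerOp_powSum _ _ _ _ _ _ hy, Fin.sum_univ_two, he₁]

theorem eulerOp_powSum_affine {a b c k m n e : ℝ} (hy : 0 < y) (he : eulerChar a b c e = 0) :
    eulerOp a b c (powSum univ ![k, m, n] ![e, 0, 1]) y = c * m + (b + c) * n * y := by
  simp only [eulerOp_powSum _ _ _ _ _ _ hy, Fin.sum_univ_three, Fin.isValue,
    Matrix.cons_val_zero, Matrix.cons_val_one, Matrix.cons_val, he, rpow_zero, rpow_one]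
  simp only [eulerChar]
  ring

end PowSum

section Piecewise

variable {f g : ℝ → ℝ} {y₀ : ℝ}

theorem HasDerivAt.ite_le {d : ℝ} (hf : HasDerivAt f d y₀) (hg : HasDerivAt g d y₀)
    (hfg : f y₀ = g y₀) : HasDerivAt (fun y => if y ≤ y₀ then f y else g y) d y₀ := by
  have hleft : HasDerivWithinAt (fun y => if y ≤ y₀ then f y else g y) d (Iic y₀) y₀ :=
    hf.hasDerivWithinAt.congr (fun y hy => if_pos hy) (if_pos le_rfl)
  have hright : HasDerivWithinAt (fun y => if y ≤ y₀ then f y else g y) d (Ici y₀) y₀ := by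
    refine hg.hasDerivWithinAt.congr (fun y hy => ?_) (by simp [hfg])
    rcases (mem_Ici.mp hy).eq_or_lt with rfl | h
    · simp [hfg]
    · simp [h.not_ge]
  simpa only [Iic_union_Ici, hasDerivWithinAt_univ] using hleft.union hright

theorem contDiffOn_one_ite_le {f' g' : ℝ → ℝ} {s : Set ℝ} (hs : IsOpen s)
    (hf : ∀ y ∈ s, HasDerivAt f (f' y) y) (hg : ∀ y ∈ s, HasDerivAt g (g' y) y)
    (hf' : ContinuousOn f' s) (hg' : ContinuousOn g' s)
    (hval : f y₀ = g y₀) (hder : f' y₀ = g' y₀) :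
    ContDiffOn ℝ 1 (fun y => if y ≤ y₀ then f y else g y) s := by
  have hu : ∀ y ∈ s, HasDerivAt (fun y => if y ≤ y₀ then f y else g y)
      (if y ≤ y₀ then f' y else g' y) y := by
    intro y hy
    rcases lt_trichotomy y y₀ with h | rfl | h
    · rw [if_pos h.le]
      exact (hf y hy).congr_of_eventuallyEq
        ((eventually_lt_nhds h).mono fun z hz => if_pos hz.le)
    · rw [if_pos le_rfl]
      exact (hf y hy).ite_le (hder ▸ hg y hy) hval
    · rw [if_neg h.not_ge]
      exact (hg y hy).congr_of_eventuallyEq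
        ((eventually_gt_nhds h).mono fun z hz => if_neg hz.not_ge)
  rw [show (1 : WithTop ℕ∞) = 0 + 1 from rfl, contDiffOn_succ_iff_deriv_of_isOpen hs,
    contDiffOn_zero]
  refine ⟨fun y hy => (hu y hy).differentiableAt.differentiableWithinAt, by simp, ?_⟩
  refine ContinuousOn.congr ?_ fun y hy => (hu y hy).deriv
  refine ContinuousOn.if ?_ (hf'.mono inter_subset_left) (hg'.mono inter_subset_left)
  rintro _ ⟨-, hy⟩
  rw [show {y | y ≤ y₀} = Iic y₀ from rfl, frontier_Iic, mem_singleton_iff] at hy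
  rw [hy, hder]

end Piecewise

section Junction

variable {r β p κ l lam₁ lam₂ C D : ℝ}

theorem rpow_rpow_mul_rpow (hl : 0 < l) (x t s : ℝ) :
    (l ^ x) ^ t * l ^ s = l ^ (x * t + s) := by
  rw [← rpow_mul hl.le, ← rpow_add hl]

theorem eulerChar_div_sub_one (a : ℝ) (hp : p ≠ 1) :
    eulerChar a (r - β) β (p / (p - 1)) = (β - p * (a / (1 - p) + r)) / (1 - p) := by
  have h1 : p - 1 ≠ 0 := sub_ne_zero.mpr hp
  have h2 : 1 - p ≠ 0 := sub_ne_zero.mpr hp.symm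
  rw [eulerChar]
  field_simp
  ring

noncomputable def junctionCoeff (r β p κ lam : ℝ) : ℝ :=
  (lam - 1) / r - lam / (β * p) + (1 - p) * lam / (p * κ) + 1 / κ

theorem value_matching (hl : 0 < l) (hlam : lam₁ ≠ lam₂) (hp : p ≠ 1)
    (hC : C = junctionCoeff r β p κ lam₁ * l ^ (p + lam₂ * (1 - p)) / (lam₂ - lam₁))
    (hD : D = junctionCoeff r β p κ lam₂ * l ^ (p + lam₁ * (1 - p)) / (lam₂ - lam₁)) :
    C * (l ^ (p - 1)) ^ lam₂ + (1 - p) / (p * κ) * (l ^ (p - 1)) ^ (p / (p - 1))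
      = D * (l ^ (p - 1)) ^ lam₁ + l ^ p / (β * p) - l / r * l ^ (p - 1) := by
  have hΔ : lam₂ - lam₁ ≠ 0 := sub_ne_zero.mpr hlam.symm
  have hp1 : p - 1 ≠ 0 := sub_ne_zero.mpr hp
  have hpow := rpow_rpow_mul_rpow hl (p - 1)
  have h₂ := hpow lam₂ (p + lam₂ * (1 - p))
  have h₁ := hpow lam₁ (p + lam₁ * (1 - p))
  have hq := hpow (p / (p - 1)) 0
  have hy := hpow 1 1
  rw [show (p - 1) * lam₂ + (p + lam₂ * (1 - p)) = p by ring] at h₂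
  rw [show (p - 1) * lam₁ + (p + lam₁ * (1 - p)) = p by ring] at h₁
  rw [show (p - 1) * (p / (p - 1)) + 0 = p by field_simp; ring, rpow_zero, mul_one] at hq
  rw [show (p - 1) * 1 + 1 = p by ring, rpow_one, rpow_one] at hy
  have key : (junctionCoeff r β p κ lam₁ - junctionCoeff r β p κ lam₂) / (lam₂ - lam₁)
      = 1 / (β * p) - 1 / r - (1 - p) / (p * κ) := by
    rw [div_eq_iff hΔ, junctionCoeff, junctionCoeff]
    ring
  subst hC hD
  linear_combination (junctionCoeff r β p κ lam₁ / (lam₂ - lam₁)) * h₂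
    - (junctionCoeff r β p κ lam₂ / (lam₂ - lam₁)) * h₁ + (1 - p) / (p * κ) * hq
    + 1 / r * hy + l ^ p * key

theorem smooth_fit (hl : 0 < l) (hlam : lam₁ ≠ lam₂) (hp0 : p ≠ 0) (hp1 : p ≠ 1)
    (hC : C = junctionCoeff r β p κ lam₁ * l ^ (p + lam₂ * (1 - p)) / (lam₂ - lam₁))
    (hD : D = junctionCoeff r β p κ lam₂ * l ^ (p + lam₁ * (1 - p)) / (lam₂ - lam₁)) :
    C * lam₂ * (l ^ (p - 1)) ^ (lam₂ - 1)
        + (1 - p) / (p * κ) * (p / (p - 1)) * (l ^ (p - 1)) ^ (p / (p - 1) - 1)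
      = D * lam₁ * (l ^ (p - 1)) ^ (lam₁ - 1) - l / r := by
  have hΔ : lam₂ - lam₁ ≠ 0 := sub_ne_zero.mpr hlam.symm
  have hp1' : p - 1 ≠ 0 := sub_ne_zero.mpr hp1
  have hpow := rpow_rpow_mul_rpow hl (p - 1)
  have h₂ := hpow (lam₂ - 1) (p + lam₂ * (1 - p))
  have h₁ := hpow (lam₁ - 1) (p + lam₁ * (1 - p))
  have hq := hpow (p / (p - 1) - 1) 0
  rw [show (p - 1) * (lam₂ - 1) + (p + lam₂ * (1 - p)) = 1 by ring, rpow_one] at h₂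
  rw [show (p - 1) * (lam₁ - 1) + (p + lam₁ * (1 - p)) = 1 by ring, rpow_one] at h₁
  rw [show (p - 1) * (p / (p - 1) - 1) + 0 = 1 by field_simp; ring, rpow_zero, mul_one,
    rpow_one] at hq
  have hAq : (1 - p) / (p * κ) * (p / (p - 1)) = -(1 / κ) := by
    field_simp
    ring
  have key : (junctionCoeff r β p κ lam₁ * lam₂ - junctionCoeff r β p κ lam₂ * lam₁)
      / (lam₂ - lam₁) = 1 / κ - 1 / r := by
    rw [div_eq_iff hΔ, junctionCoeff, junctionCoeff]
    ring
  subst hC hD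
  linear_combination (junctionCoeff r β p κ lam₁ * lam₂ / (lam₂ - lam₁)) * h₂
    - (junctionCoeff r β p κ lam₂ * lam₁ / (lam₂ - lam₁)) * h₁
    + (1 - p) / (p * κ) * (p / (p - 1)) * hq + l * hAq + l * key

end Junction

theorem stmt_19_general (μ σ r β l p : ℝ) (hr : 0 < r) (hβ : 0 < β)
    (hl : 0 < l) (hp0 : 0 < p) (hp1 : p < 1)
    (κ : ℝ) (hκdef : κ = (β - p * (μ ^ 2 / (2 * σ ^ 2 * (1 - p)) + r)) / (1 - p))
    (hκ : 0 < κ)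
    (lam₁ lam₂ : ℝ) (hlam₁ : lam₁ < 0) (hlam₂ : 1 < lam₂)
    (hroot₁ : -(μ ^ 2 / (2 * σ ^ 2)) * lam₁ * (lam₁ - 1) + (r - β) * lam₁ + β = 0)
    (hroot₂ : -(μ ^ 2 / (2 * σ ^ 2)) * lam₂ * (lam₂ - 1) + (r - β) * lam₂ + β = 0)
    (C D : ℝ)
    (hC : C = ((lam₁ - 1) / r - lam₁ / (β * p) + (1 - p) * lam₁ / (p * κ) + 1 / κ)
      * l ^ (p + lam₂ * (1 - p)) / (lam₂ - lam₁))
    (hD : D = ((lam₂ - 1) / r - lam₂ / (β * p) + (1 - p) * lam₂ / (p * κ) + 1 / κ)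
      * l ^ (p + lam₁ * (1 - p)) / (lam₂ - lam₁))
    (v : ℝ → ℝ)
    (hv : v = fun y : ℝ =>
      if y ≤ l ^ (p - 1) then C * y ^ lam₂ + (1 - p) / (p * κ) * y ^ (p / (p - 1))
      else D * y ^ lam₁ + l ^ p / (β * p) - l / r * y) :
    (C * (l ^ (p - 1)) ^ lam₂ + (1 - p) / (p * κ) * (l ^ (p - 1)) ^ (p / (p - 1))
        = D * (l ^ (p - 1)) ^ lam₁ + l ^ p / (β * p) - l / r * l ^ (p - 1)) ∧
    ContDiffOn ℝ 1 v (Ioi 0) ∧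
    (∀ y : ℝ, 0 < y → y < l ^ (p - 1) →
      -(μ ^ 2 / (2 * σ ^ 2)) * y ^ 2 * deriv (deriv v) y + (r - β) * y * deriv v y
        + β * v y = (1 - p) / p * y ^ (p / (p - 1))) ∧
    (∀ y : ℝ, l ^ (p - 1) < y →
      -(μ ^ 2 / (2 * σ ^ 2)) * y ^ 2 * deriv (deriv v) y + (r - β) * y * deriv v y
        + β * v y = l ^ p / p - l * y) := by
  set v₁ := powSum univ ![C, (1 - p) / (p * κ)] ![lam₂, p / (p - 1)]
  set v₂ := powSum univ ![D, l ^ p / (β * p), -(l / r)] ![lam₁, 0, 1]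
  have hv' : v = fun y => if y ≤ l ^ (p - 1) then v₁ y else v₂ y := by
    subst hv
    funext y
    simp [v₁, v₂, powSum, Fin.sum_univ_two, Fin.sum_univ_three, sub_eq_add_neg]
  have hlam : lam₁ ≠ lam₂ := by linarith
  have hmatch := value_matching hl hlam hp1.ne hC hD
  have hqκ : eulerChar (μ ^ 2 / (2 * σ ^ 2)) (r - β) β (p / (p - 1)) = κ := by
    rw [eulerChar_div_sub_one _ hp1.ne, div_div, hκdef]
  refine ⟨hmatch, ?_, fun y hy hyy₀ => ?_, fun y hy => ?_⟩
  · rw [hv']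
    refine contDiffOn_one_ite_le isOpen_Ioi (fun y hy => hasDerivAt_powSum _ _ _ hy)
      (fun y hy => hasDerivAt_powSum _ _ _ hy) (continuousOn_powSum _ _ _)
      (continuousOn_powSum _ _ _) ?_ ?_
    · simpa [v₁, v₂, powSum, Fin.sum_univ_two, Fin.sum_univ_three, sub_eq_add_neg] using hmatch
    · simpa [powSum, Fin.sum_univ_two, Fin.sum_univ_three, sub_eq_add_neg] using
        smooth_fit hl hlam hp0.ne' hp1.ne hC hD
  · have hvv : v =ᶠ[𝓝 y] v₁ := by
      filter_upwards [eventually_lt_nhds hyy₀] with z hz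
      rw [hv']
      exact if_pos hz.le
    change eulerOp (μ ^ 2 / (2 * σ ^ 2)) (r - β) β v y = _
    rw [hvv.eulerOp_eq, eulerOp_powSum_two hy hroot₂, hqκ]
    field_simp
  · have hvv : v =ᶠ[𝓝 y] v₂ := by
      filter_upwards [eventually_gt_nhds hy] with z hz
      rw [hv']
      exact if_neg hz.not_ge
    change eulerOp (μ ^ 2 / (2 * σ ^ 2)) (r - β) β v y = _
    rw [hvv.eulerOp_eq, eulerOp_powSum_affine ((rpow_pos_of_pos hl _).trans hy) hroot₁]
    field_simp
    ring

/-- explicit `C¹` solution of the dual HJB ODE in the state-independent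
constraint case `k = 0`, `l > 0`: with `λ₁ < 0 < 1 < λ₂` the roots of the characteristic
polynomial and `C`, `D` the value-matching/smooth-fit constants, the piecewise function
`v` is well defined, continuously differentiable on `(0,∞)`, and solves the Euler-type
ODE on each of the two regions. -/
theorem stmt_19 (μ σ r β l p : ℝ) (hμ : 0 < μ) (hσ : 0 < σ) (hr : 0 < r) (hβ : 0 < β)
    (hl : 0 < l) (hp0 : 0 < p) (hp1 : p < 1)
    (κ : ℝ) (hκdef : κ = (β - p * (μ ^ 2 / (2 * σ ^ 2 * (1 - p)) + r)) / (1 - p))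
    (hκ : 0 < κ)
    (lam₁ lam₂ : ℝ) (hlam₁ : lam₁ < 0) (hlam₂ : 1 < lam₂)
    (hroot₁ : -(μ ^ 2 / (2 * σ ^ 2)) * lam₁ * (lam₁ - 1) + (r - β) * lam₁ + β = 0)
    (hroot₂ : -(μ ^ 2 / (2 * σ ^ 2)) * lam₂ * (lam₂ - 1) + (r - β) * lam₂ + β = 0)
    (C D : ℝ)
    (hC : C = ((lam₁ - 1) / r - lam₁ / (β * p) + (1 - p) * lam₁ / (p * κ) + 1 / κ)
      * l ^ (p + lam₂ * (1 - p)) / (lam₂ - lam₁))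
    (hD : D = ((lam₂ - 1) / r - lam₂ / (β * p) + (1 - p) * lam₂ / (p * κ) + 1 / κ)
      * l ^ (p + lam₁ * (1 - p)) / (lam₂ - lam₁))
    (v : ℝ → ℝ)
    (hv : v = fun y : ℝ =>
      if y ≤ l ^ (p - 1) then C * y ^ lam₂ + (1 - p) / (p * κ) * y ^ (p / (p - 1))
      else D * y ^ lam₁ + l ^ p / (β * p) - l / r * y) :
    (C * (l ^ (p - 1)) ^ lam₂ + (1 - p) / (p * κ) * (l ^ (p - 1)) ^ (p / (p - 1))
        = D * (l ^ (p - 1)) ^ lam₁ + l ^ p / (β * p) - l / r * l ^ (p - 1)) ∧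
    ContDiffOn ℝ 1 v (Ioi 0) ∧
    (∀ y : ℝ, 0 < y → y < l ^ (p - 1) →
      -(μ ^ 2 / (2 * σ ^ 2)) * y ^ 2 * deriv (deriv v) y + (r - β) * y * deriv v y
        + β * v y = (1 - p) / p * y ^ (p / (p - 1))) ∧
    (∀ y : ℝ, l ^ (p - 1) < y →
      -(μ ^ 2 / (2 * σ ^ 2)) * y ^ 2 * deriv (deriv v) y + (r - β) * y * deriv v y
        + β * v y = l ^ p / p - l * y) :=
  stmt_19_general μ σ r β l p hr hβ hl hp0 hp1 κ hκdef hκ lam₁ lam₂ hlam₁ hlam₂ hroot₁ hroot₂ C D hC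
    hD v hv
end
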